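/- arXiv:math/0502278 — 9 statements merged into one kernel-verified Lean document; each statement's English description precedes it below -/
import Mathlib

section
/- In a finite lattice with a maximal chain of n+1 elements, there are at least n join-irreducible elements and at least n meet-irreducible elements. -/
variable {α : Type*}

/-- An element is join-irreducible if it is not the minimum and is not a join
of two strictly smaller elements. -/
def JoinIrred [Lattice α] (a : α) : Prop :=
  ¬ IsBot a ∧ ∀ b c : α, b < a → c < a → b ⊔ c ≠ a

/-- An element is meet-irreducible if it is not the maximum and is not a meet
of two strictly larger elements. -/
def MeetIrred [Lattice α] (a : α) : Prop :=
  ¬ IsTop a ∧ ∀ b c : α, a < b → a < c → b ⊓ c ≠ a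

/-- An element `x` is left modular if `(y ⊔ x) ⊓ z = y ⊔ (x ⊓ z)` for all `y < z`. -/
def LeftModular [Lattice α] (x : α) : Prop :=
  ∀ y z : α, y < z → (y ⊔ x) ⊓ z = y ⊔ (x ⊓ z)

/-- A maximal chain `⊥ = x 0 ⋖ x 1 ⋖ ⋯ ⋖ x n = ⊤` all of whose elements are left modular. -/
def IsLMChain [Lattice α] {n : ℕ} (x : Fin (n + 1) → α) : Prop :=
  IsBot (x 0) ∧ IsTop (x (Fin.last n)) ∧ (∀ i : Fin n, x i.castSucc ⋖ x i.succ) ∧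
    ∀ i, LeftModular (x i)

/-- A finite lattice is trim if it has a left modular maximal chain of `n + 1` elements,
exactly `n` join-irreducibles and exactly `n` meet-irreducibles. -/
def Trim (α : Type*) [Lattice α] [Finite α] : Prop :=
  ∃ (n : ℕ) (x : Fin (n + 1) → α), IsLMChain x ∧
    Nat.card {v : α // JoinIrred v} = n ∧ Nat.card {v : α // MeetIrred v} = n

lemma exists_joinIrred [Lattice α] [Finite α] (a : α) :
    ∀ b : α, ¬ a ≤ b → ∃ j : α, JoinIrred j ∧ j ≤ a ∧ ¬ j ≤ b := by
  induction a using WellFoundedLT.induction with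
  | _ a ih =>
    intro b hab
    by_cases hj : JoinIrred a
    · exact ⟨a, hj, le_rfl, hab⟩
    · rw [JoinIrred, not_and_or] at hj
      rcases hj with h | h
      · rw [not_not] at h; exact absurd (h b) hab
      · push_neg at h
        obtain ⟨c, d, hc, hd, hcd⟩ := h
        by_cases hcb : c ≤ b
        · have hdb : ¬ d ≤ b := fun hdb => hab (hcd ▸ sup_le hcb hdb)
          obtain ⟨j, hj1, hj2, hj3⟩ := ih d hd b hdb
          exact ⟨j, hj1, hj2.trans hd.le, hj3⟩
        · obtain ⟨j, hj1, hj2, hj3⟩ := ih c hc b hcb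
          exact ⟨j, hj1, hj2.trans hc.le, hj3⟩

lemma exists_meetIrred [Lattice α] [Finite α] (a : α) :
    ∀ b : α, ¬ b ≤ a → ∃ m : α, MeetIrred m ∧ a ≤ m ∧ ¬ b ≤ m := by
  induction a using WellFoundedGT.induction with
  | _ a ih =>
    intro b hab
    by_cases hj : MeetIrred a
    · exact ⟨a, hj, le_rfl, hab⟩
    · rw [MeetIrred, not_and_or] at hj
      rcases hj with h | h
      · rw [not_not] at h; exact absurd (h b) hab
      · push_neg at h
        obtain ⟨c, d, hc, hd, hcd⟩ := h
        by_cases hcb : b ≤ c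
        · have hdb : ¬ b ≤ d := fun hdb => hab (hcd ▸ le_inf hcb hdb)
          obtain ⟨m, hm1, hm2, hm3⟩ := ih d hd b hdb
          exact ⟨m, hm1, hd.le.trans hm2, hm3⟩
        · obtain ⟨m, hm1, hm2, hm3⟩ := ih c hc b hcb
          exact ⟨m, hm1, hc.le.trans hm2, hm3⟩


/-- A finite lattice with a maximal chain of `n + 1` elements has at least `n`
join-irreducibles and at least `n` meet-irreducibles. -/
theorem at_least_n_irreducibles [Lattice α] [Finite α] {n : ℕ} (x : Fin (n + 1) → α)
    (h0 : IsBot (x 0)) (h1 : IsTop (x (Fin.last n)))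
    (hcov : ∀ i : Fin n, x i.castSucc ⋖ x (i.succ)) :
    n ≤ Nat.card {v : α // JoinIrred v} ∧ n ≤ Nat.card {v : α // MeetIrred v} := by
  have hmono : StrictMono x := Fin.strictMono_iff_lt_succ.mpr fun i => (hcov i).lt
  have hle : ∀ i i' : Fin n, i < i' → x i.succ ≤ x i'.castSucc := by
    intro i i' h
    exact hmono.monotone (by rw [Fin.le_def]; rw [Fin.lt_def] at h; simpa using h)
  constructor
  · have key : ∀ i : Fin n, ∃ j : α, JoinIrred j ∧ j ≤ x i.succ ∧ ¬ j ≤ x i.castSucc :=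
      fun i => exists_joinIrred _ _ (not_le_of_gt (hcov i).lt)
    choose f hf1 hf2 hf3 using key
    have hinj : Function.Injective fun i : Fin n => (⟨f i, hf1 i⟩ : {v : α // JoinIrred v}) := by
      intro i i' h
      simp only [Subtype.mk.injEq] at h
      by_contra hne
      rcases lt_or_gt_of_ne hne with hlt | hlt
      · exact hf3 i' (h ▸ (hf2 i).trans (hle i i' hlt))
      · exact hf3 i (h ▸ (hf2 i').trans (hle i' i hlt))
    calc n = Nat.card (Fin n) := (Nat.card_eq_of_equiv_fin (Equiv.refl _)).symm
    _ ≤ _ := Nat.card_le_card_of_injective _ hinj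
  · have key : ∀ i : Fin n, ∃ m : α, MeetIrred m ∧ x i.castSucc ≤ m ∧ ¬ x i.succ ≤ m :=
      fun i => exists_meetIrred _ _ (not_le_of_gt (hcov i).lt)
    choose f hf1 hf2 hf3 using key
    have hinj : Function.Injective fun i : Fin n => (⟨f i, hf1 i⟩ : {v : α // MeetIrred v}) := by
      intro i i' h
      simp only [Subtype.mk.injEq] at h
      by_contra hne
      rcases lt_or_gt_of_ne hne with hlt | hlt
      · exact hf3 i (h ▸ (hle i i' hlt).trans (hf2 i'))
      · exact hf3 i' (h.symm ▸ (hle i' i hlt).trans (hf2 i))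
    calc n = Nat.card (Fin n) := (Nat.card_eq_of_equiv_fin (Equiv.refl _)).symm
    _ ≤ _ := Nat.card_le_card_of_injective _ hinj
end

section
/- If L is a finite lattice with a left modular maximal chain 0 = x_0 ⋖ x_1 ⋖ ... ⋖ x_n = 1, then for any interval [y,z] of L, the elements y ∨ (x_i ∧ z) form a left modular maximal chain in [y,z] (after removing duplicates). -/
variable {α : Type*}

/-- In a lattice with left modular maximal chain `x`, the elements `y ⊔ (x i ⊓ z)`
form a left modular maximal chain of the interval `[y, z]` (after removing duplicates):
they start at `y`, end at `z`, are weakly increasing, consecutive ones are either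
equal or form a covering pair of the interval, and each is left modular in `[y, z]`. -/
theorem interval_left_modular_chain [Lattice α] [Finite α] {n : ℕ}
    (x : Fin (n + 1) → α) (hx : IsLMChain x) (y z : α) (hyz : y ≤ z) :
    (y ⊔ (x 0 ⊓ z) = y) ∧ (y ⊔ (x (Fin.last n) ⊓ z) = z) ∧
    (Monotone fun i => y ⊔ (x i ⊓ z)) ∧
    (∀ i : Fin n, y ⊔ (x i.castSucc ⊓ z) = y ⊔ (x i.succ ⊓ z) ∨
      (y ⊔ (x i.castSucc ⊓ z) < y ⊔ (x i.succ ⊓ z) ∧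
        ∀ u ∈ Set.Icc y z, ¬(y ⊔ (x i.castSucc ⊓ z) < u ∧ u < y ⊔ (x i.succ ⊓ z)))) ∧
    (∀ i : Fin (n + 1), ∀ u ∈ Set.Icc y z, ∀ w ∈ Set.Icc y z, u < w →
      (u ⊔ (y ⊔ (x i ⊓ z))) ⊓ w = u ⊔ ((y ⊔ (x i ⊓ z)) ⊓ w)) := by
  obtain ⟨hbot, htop, hcov, hlm⟩ := hx
  have hmono : Monotone x := by
    have : ∀ i : Fin n, x i.castSucc ≤ x i.succ := fun i => (hcov i).le
    exact Fin.monotone_iff_le_succ.mpr this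
  refine ⟨?_, ?_, ?_, ?_, ?_⟩
  · exact sup_eq_left.2 (le_trans inf_le_left (hbot y))
  · rw [inf_eq_right.2 (htop z), sup_eq_right.2 hyz]
  · exact fun i j hij => sup_le_sup_left (inf_le_inf_right z (hmono hij)) y
  · intro i
    rcases eq_or_lt_of_le
      (sup_le_sup_left (inf_le_inf_right z (hcov i).le) y) with h | h
    · exact Or.inl h
    refine Or.inr ⟨h, ?_⟩
    rintro u ⟨hyu, huz⟩ ⟨h1, h2⟩
    set a := x i.castSucc with ha
    set b := x i.succ with hb
    have hyu' : y < u := lt_of_le_of_lt le_sup_left h1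
    have huz' : u < z := lt_of_lt_of_le h2 (sup_le hyz inf_le_right)
    rcases (hcov i).eq_or_eq (c := (u ⊔ a) ⊓ b) (le_inf le_sup_right (hcov i).le)
      inf_le_right with e | e
    · -- (u ⊔ a) ⊓ b = a : use left modularity of b at y < u
      have hub : u ⊓ b ≤ a := (inf_le_inf_right b le_sup_left).trans e.le
      have hlmb := hlm i.succ y u hyu'
      have hu : u ≤ y ⊔ b := le_trans h2.le (sup_le_sup_left inf_le_left y)
      have : u ≤ y ⊔ (a ⊓ z) := by
        calc u = (y ⊔ b) ⊓ u := (inf_eq_right.2 hu).symm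
        _ = y ⊔ (b ⊓ u) := hlmb
        _ ≤ y ⊔ (a ⊓ z) :=
            sup_le_sup_left (le_inf (le_trans (inf_comm b u ▸ le_rfl) hub)
              (le_trans inf_le_right huz)) y
      exact absurd this (not_le_of_gt h1)
    · -- (u ⊔ a) ⊓ b = b : use left modularity of a at u < z
      have hba : b ≤ u ⊔ a := e.ge.trans inf_le_left
      have hlma := hlm i.castSucc u z huz'
      have haz : a ⊓ z ≤ u := le_trans le_sup_right h1.le
      have : y ⊔ (b ⊓ z) ≤ u := by
        refine sup_le hyu ?_
        calc b ⊓ z ≤ (u ⊔ a) ⊓ z := inf_le_inf_right z hba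
        _ = u ⊔ (a ⊓ z) := hlma
        _ = u := sup_eq_left.2 haz
      exact absurd this (not_le_of_gt h2)
  · rintro i u ⟨hyu, huz⟩ w ⟨hyw, hwz⟩ huw
    set v := x i with hv
    have hyw' : y < w := lt_of_le_of_lt hyu huw
    have hlmu := hlm i u w huw
    have hlmy := hlm i y w hyw'
    have key : (u ⊔ (v ⊓ z)) ⊓ w = u ⊔ (v ⊓ w) := by
      apply le_antisymm
      · calc (u ⊔ (v ⊓ z)) ⊓ w ≤ (u ⊔ v) ⊓ w := inf_le_inf_right w (sup_le_sup_left inf_le_left u)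
        _ = u ⊔ (v ⊓ w) := hlmu
      · exact le_inf (sup_le_sup_left (le_inf inf_le_left (le_trans inf_le_right hwz)) u)
          (sup_le huw.le inf_le_right)
    have key2 : (y ⊔ (v ⊓ z)) ⊓ w = y ⊔ (v ⊓ w) := by
      apply le_antisymm
      · calc (y ⊔ (v ⊓ z)) ⊓ w ≤ (y ⊔ v) ⊓ w := inf_le_inf_right w (sup_le_sup_left inf_le_left y)
        _ = y ⊔ (v ⊓ w) := hlmy
      · exact le_inf (sup_le_sup_left (le_inf inf_le_left (le_trans inf_le_right hwz)) y)
          (sup_le hyw'.le inf_le_right)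
    calc (u ⊔ (y ⊔ (v ⊓ z))) ⊓ w = (u ⊔ (v ⊓ z)) ⊓ w := by
          rw [← sup_assoc, sup_eq_left.2 hyu]
    _ = u ⊔ (v ⊓ w) := key
    _ = u ⊔ (y ⊔ (v ⊓ w)) := by rw [← sup_assoc, sup_eq_left.2 hyu]
    _ = u ⊔ ((y ⊔ (v ⊓ z)) ⊓ w) := by rw [key2]
end

section
/- Let L be a finite lattice with a left modular maximal chain 0 = x_0 ⋖ x_1 ⋖ ... ⋖ x_n = 1. For a join-irreducible v define δ(v) = min{i : v ≤ x_i}. If y and z are join-irreducibles with δ(y) = δ(z) and y ≠ z, then y and z are incomparable. -/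
variable {α : Type*}

/-! If `y < z` share the label `i + 1`, then `y ⊔ x i = x (i + 1) ≥ z` because `x i ⋖ x (i + 1)`,
and left modularity of `x i` writes `z = (y ⊔ x i) ⊓ z = y ⊔ (x i ⊓ z)`, a join of two elements
strictly below `z` (`x i ⊓ z < z` since `z ≰ x i`), so `z` is not join-irreducible. -/

theorem LeftModular.sup_inf_eq_of_le_sup [Lattice α] {p y z : α} (hp : LeftModular p)
    (hyz : y < z) (hz : z ≤ y ⊔ p) : y ⊔ p ⊓ z = z := by
  rw [← hp y z hyz, inf_eq_right.2 hz]

theorem LeftModular.not_joinIrred_of_le_sup [Lattice α] {p y z : α} (hp : LeftModular p)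
    (hyz : y < z) (hz : z ≤ y ⊔ p) (hzp : ¬ z ≤ p) : ¬ JoinIrred z := fun hirr =>
  hirr.2 y (p ⊓ z) hyz (inf_le_right.lt_of_not_ge fun h => hzp (h.trans inf_le_left))
    (hp.sup_inf_eq_of_le_sup hyz hz)

theorem CovBy.sup_eq_of_le_of_not_le [Lattice α] {a b v : α} (hab : a ⋖ b) (hvb : v ≤ b)
    (hva : ¬ v ≤ a) : v ⊔ a = b :=
  (hab.eq_or_eq le_sup_right (sup_le hvb hab.le)).resolve_left
    fun h => hva (h ▸ le_sup_left)

theorem exists_succ_eq_and_sup_eq_of_isLeast [Lattice α] {n : ℕ} {x : Fin (n + 1) → α}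
    (h0 : IsBot (x 0)) (hcov : ∀ i : Fin n, x i.castSucc ⋖ x i.succ) {v : α} (hv : ¬ IsBot v)
    {j : Fin (n + 1)} (hj : IsLeast {i | v ≤ x i} j) :
    ∃ i : Fin n, i.succ = j ∧ v ⊔ x i.castSucc = x j := by
  obtain ⟨i, rfl⟩ := Fin.exists_succ_eq_of_ne_zero fun hj0 : j = 0 =>
    hv fun a => (hj0 ▸ hj.1 : v ≤ x 0).trans (h0 a)
  refine ⟨i, rfl, (hcov i).sup_eq_of_le_of_not_le hj.1 fun h => ?_⟩
  exact (hj.2 h).not_gt i.castSucc_lt_succ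

theorem IsLMChain.not_lt_of_isLeast_of_isLeast [Lattice α] {n : ℕ} {x : Fin (n + 1) → α}
    (hx : IsLMChain x) {y z : α} (hy : ¬ IsBot y) (hz : JoinIrred z) {j : Fin (n + 1)}
    (hjy : IsLeast {i | y ≤ x i} j) (hjz : IsLeast {i | z ≤ x i} j) : ¬ y < z := fun hyz => by
  obtain ⟨h0, -, hcov, hlm⟩ := hx
  obtain ⟨i, rfl, hsup⟩ := exists_succ_eq_and_sup_eq_of_isLeast h0 hcov hy hjy
  exact (hlm i.castSucc).not_joinIrred_of_le_sup hyz (hsup ▸ hjz.1)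
    (fun h => (hjz.2 h).not_gt i.castSucc_lt_succ) hz

theorem join_irred_same_label_incomparable_general [Lattice α] {n : ℕ}
    (x : Fin (n + 1) → α) (hx : IsLMChain x) {y z : α}
    (hy : JoinIrred y) (hz : JoinIrred z) (j : Fin (n + 1))
    (hjy : IsLeast {i : Fin (n + 1) | y ≤ x i} j)
    (hjz : IsLeast {i : Fin (n + 1) | z ≤ x i} j)
    (hne : y ≠ z) :
    ¬ y ≤ z ∧ ¬ z ≤ y :=
  ⟨fun h => hx.not_lt_of_isLeast_of_isLeast hy.1 hz hjy hjz (h.lt_of_ne hne),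
    fun h => hx.not_lt_of_isLeast_of_isLeast hz.1 hy hjz hjy (h.lt_of_ne hne.symm)⟩

/-- Two distinct join-irreducibles with the same label `δ` (the least `i` with
`v ≤ x i` along a left modular maximal chain) are incomparable. -/
theorem join_irred_same_label_incomparable [Lattice α] [Finite α] {n : ℕ}
    (x : Fin (n + 1) → α) (hx : IsLMChain x) {y z : α}
    (hy : JoinIrred y) (hz : JoinIrred z) (j : Fin (n + 1))
    (hjy : IsLeast {i : Fin (n + 1) | y ≤ x i} j)
    (hjz : IsLeast {i : Fin (n + 1) | z ≤ x i} j)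
    (hne : y ≠ z) :
    ¬ y ≤ z ∧ ¬ z ≤ y :=
  join_irred_same_label_incomparable_general x hx hy hz j hjy hjz hne
end

section
/- In a finite left modular lattice with left modular maximal chain 0 = x_0 ⋖ ... ⋖ x_n = 1, the two edge labellings γ_1(y⋖z) = min{δ(v) : v join-irreducible, v ≤ z, v ≰ y} and γ_3(y⋖z) = min{i : y ∨ (x_i ∧ z) = z} coincide on all covering relations y ⋖ z. -/
variable {α : Type*}

/-! Since `y ⋖ z`, the condition `y ⊔ (x i ⊓ z) = z` says exactly that `x i ⊓ z ≰ y`.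
Every join-irreducible `v ≤ z`, `v ≰ y` has `x (δ v) ⊓ z ≰ y`, and conversely a minimal element
below `x i ⊓ z` that is not below `y` is join-irreducible with `δ v ≤ i`. So the two index sets
are nested and have the same lower bounds, hence the same least element. -/

theorem joinIrred_of_minimal_not_le [Lattice α] {y v : α} (hv : Minimal (fun w ↦ ¬ w ≤ y) v) :
    JoinIrred v := by
  refine ⟨fun hbot ↦ hv.prop (hbot y), fun b c hb hc hbc ↦ hv.prop ?_⟩
  have hby : b ≤ y := by_contra fun h ↦ hb.not_ge (hv.le_of_le h hb.le)
  have hcy : c ≤ y := by_contra fun h ↦ hc.not_ge (hv.le_of_le h hc.le)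
  exact hbc ▸ sup_le hby hcy

theorem exists_joinIrred_le_not_le [Lattice α] [WellFoundedLT α] {a y : α} (h : ¬ a ≤ y) :
    ∃ v, JoinIrred v ∧ v ≤ a ∧ ¬ v ≤ y := by
  obtain ⟨v, hva, hv⟩ := exists_minimal_le_of_wellFoundedLT (fun w ↦ ¬ w ≤ y) a h
  exact ⟨v, joinIrred_of_minimal_not_le hv, hva, hv.prop⟩

theorem CovBy.sup_eq_iff_not_le [Lattice α] {y z u : α} (hyz : y ⋖ z) (huz : u ≤ z) :
    y ⊔ u = z ↔ ¬ u ≤ y := by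
  refine ⟨fun h hu ↦ hyz.ne (by rwa [sup_eq_left.mpr hu] at h), fun hu ↦ ?_⟩
  exact (sup_le hyz.le huz).eq_of_not_lt (hyz.2 (left_lt_sup.mpr hu))

theorem isLeast_iff_of_subset_of_forall_exists_le {ι : Type*} [PartialOrder ι] {s t : Set ι}
    (hst : s ⊆ t) (hts : ∀ i ∈ t, ∃ j ∈ s, j ≤ i) {a : ι} : IsLeast s a ↔ IsLeast t a := by
  refine ⟨fun ha ↦ ⟨hst ha.1, fun i hi ↦ ?_⟩, fun ha ↦ ?_⟩
  · obtain ⟨j, hj, hji⟩ := hts i hi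
    exact (ha.2 hj).trans hji
  · obtain ⟨j, hj, hja⟩ := hts a ha.1
    obtain rfl : j = a := hja.antisymm (ha.2 (hst hj))
    exact ⟨hj, fun i hi ↦ ha.2 (hst hi)⟩

theorem labellings_coincide_general [Lattice α] [Finite α] {n : ℕ}
    (x : Fin (n + 1) → α) {y z : α} (hyz : y ⋖ z)
    (j : Fin (n + 1)) :
    IsLeast {i : Fin (n + 1) | ∃ v : α, JoinIrred v ∧ v ≤ z ∧ ¬ v ≤ y ∧
        IsLeast {k : Fin (n + 1) | v ≤ x k} i} j ↔
    IsLeast {i : Fin (n + 1) | y ⊔ (x i ⊓ z) = z} j := by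
  have hγ₃ (i : Fin (n + 1)) : y ⊔ (x i ⊓ z) = z ↔ ¬ x i ⊓ z ≤ y :=
    hyz.sup_eq_iff_not_le inf_le_right
  refine isLeast_iff_of_subset_of_forall_exists_le ?_ fun i hi ↦ ?_
  · rintro i ⟨v, -, hvz, hvy, hvi, -⟩
    exact (hγ₃ i).mpr fun h ↦ hvy ((le_inf hvi hvz).trans h)
  · obtain ⟨v, hv, hvle, hvy⟩ := exists_joinIrred_le_not_le ((hγ₃ i).mp hi)
    have hvi : v ≤ x i := hvle.trans inf_le_left
    obtain ⟨k, hk⟩ := exists_minimal_of_wellFoundedLT (fun k ↦ v ≤ x k) ⟨i, hvi⟩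
    have hδ : IsLeast {k | v ≤ x k} k := minimal_iff_isLeast.mp hk
    exact ⟨k, ⟨v, hv, hvle.trans inf_le_right, hvy, hδ⟩, hδ.2 hvi⟩

/-- In a left modular lattice, for any covering relation `y ⋖ z`, the labelling induced
from join-irreducibles, `γ₁(y ⋖ z) = min {δ v | v` join-irreducible, `v ≤ z, v ≰ y}`,
coincides with the labelling induced from the left modular chain,
`γ₃(y ⋖ z) = min {i | y ⊔ (x i ⊓ z) = z}`. -/
theorem labellings_coincide [Lattice α] [Finite α] {n : ℕ}
    (x : Fin (n + 1) → α) (hx : IsLMChain x) {y z : α} (hyz : y ⋖ z)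
    (j : Fin (n + 1)) :
    IsLeast {i : Fin (n + 1) | ∃ v : α, JoinIrred v ∧ v ≤ z ∧ ¬ v ≤ y ∧
        IsLeast {k : Fin (n + 1) | v ≤ x k} i} j ↔
    IsLeast {i : Fin (n + 1) | y ⊔ (x i ⊓ z) = z} j :=
  labellings_coincide_general x hyz j
end

section
/- A trim lattice contains no sublattice isomorphic to M_3 (the five-element lattice with three pairwise incomparable atoms whose pairwise joins equal the top and pairwise meets equal the bottom). -/
variable {α : Type*}

/-- In a finite lattice, if `u ≰ v` then there is a join-irreducible below `u`
and not below `v` (take a minimal element of `{s | s ≤ u ∧ ¬ s ≤ v}`). -/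
private lemma exists_JI_le [Lattice α] [Finite α] {u v : α} (h : ¬ u ≤ v) :
    ∃ j, JoinIrred j ∧ j ≤ u ∧ ¬ j ≤ v := by
  obtain ⟨j, ⟨hju, hjv⟩, hmin⟩ :=
    (wellFounded_lt (α := α)).has_min {s | s ≤ u ∧ ¬ s ≤ v} ⟨u, le_rfl, h⟩
  refine ⟨j, ⟨fun hb => hjv (hb v), ?_⟩, hju, hjv⟩
  intro p q hp hq hpq
  have hpv : p ≤ v := by
    by_contra hc
    exact hmin p ⟨hp.le.trans hju, hc⟩ hp
  have hqv : q ≤ v := by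
    by_contra hc
    exact hmin q ⟨hq.le.trans hju, hc⟩ hq
  exact hjv (hpq ▸ sup_le hpv hqv)

/-- The "level" of an element relative to a chain `X : ℕ → α`: the first index `k`
with `y ≤ X k`. -/
private noncomputable def levAux [Lattice α] (X : ℕ → α) (y : α) : ℕ :=
  sInf {k | y ≤ X k}

private lemma main_aux [Lattice α] [Finite α] {n : ℕ} (X : ℕ → α)
    (hX0 : ∀ y, X 0 ≤ y) (hXn : ∀ y, y ≤ X n) (hXmono : Monotone X)
    (hXsucc : ∀ k, k < n → X k < X (k + 1)) (hXlm : ∀ k, LeftModular (X k))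
    (hJIcard : Nat.card {v : α // JoinIrred v} = n)
    {w t a b c : α} (hwa : w < a) (hwb : w < b) (hwc : w < c)
    (jab : a ⊔ b = t) (jac : a ⊔ c = t) (jbc : b ⊔ c = t)
    (mab : a ⊓ b = w) (mac : a ⊓ c = w) (mbc : b ⊓ c = w) : False := by
  -- basic properties of the level function
  have hlev_spec : ∀ y : α, y ≤ X (levAux X y) := fun y =>
    Nat.sInf_mem (s := {k | y ≤ X k}) ⟨n, hXn y⟩
  have hlev_le : ∀ (y : α) (m : ℕ), y ≤ X m → levAux X y ≤ m := fun y m hm =>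
    Nat.sInf_le (s := {k | y ≤ X k}) hm
  have hlev_ub : ∀ y : α, levAux X y ≤ n := fun y => hlev_le y n (hXn y)
  have hlev_pos : ∀ j : α, JoinIrred j → 1 ≤ levAux X j := by
    intro j hj
    by_contra h0
    have h0' : levAux X j = 0 := by omega
    have hj0 : j ≤ X 0 := by
      have hs := hlev_spec j
      rwa [h0'] at hs
    exact hj.1 fun y => hj0.trans (hX0 y)
  -- two join-irreducibles of the same level coincide
  have lev_inj : ∀ j j' : α, JoinIrred j → JoinIrred j' →
      levAux X j = levAux X j' → j = j' := by
    intro j j' hj hj' hll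
    let F : {v : α // JoinIrred v} → Fin n := fun v =>
      ⟨levAux X v.1 - 1, by
        have h1 := hlev_ub v.1
        have h2 := hlev_pos v.1 v.2
        omega⟩
    have hFsurj : Function.Surjective F := by
      rintro ⟨k, hk⟩
      obtain ⟨j0, hj0, hle, hnle⟩ := exists_JI_le (hXsucc k hk).not_ge
      refine ⟨⟨j0, hj0⟩, ?_⟩
      have h1 : levAux X j0 ≤ k + 1 := hlev_le j0 (k + 1) hle
      have h2 : ¬ levAux X j0 ≤ k := fun hcon => hnle ((hlev_spec j0).trans (hXmono hcon))
      exact Fin.ext (by show levAux X j0 - 1 = k; omega)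
    have hcard : Nat.card {v : α // JoinIrred v} = Nat.card (Fin n) := by
      rw [hJIcard, Nat.card_eq_fintype_card, Fintype.card_fin]
    have hFbij : Function.Bijective F :=
      (Nat.bijective_iff_surjective_and_card F).mpr ⟨hFsurj, hcard⟩
    have h12 : (⟨j, hj⟩ : {v : α // JoinIrred v}) = ⟨j', hj'⟩ :=
      hFbij.injective (Fin.ext (by show levAux X j - 1 = levAux X j' - 1; omega))
    exact congrArg Subtype.val h12
  have hwt : w < t := hwa.trans_le (le_sup_left.trans jab.le)
  -- the first index `cc` with `t ≤ w ⊔ X cc`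
  obtain ⟨cc, hcc, hccmin, hc1⟩ :
      ∃ cc, t ≤ w ⊔ X cc ∧ (∀ m, m < cc → ¬ t ≤ w ⊔ X m) ∧ 1 ≤ cc := by
    have hne : {k | t ≤ w ⊔ X k}.Nonempty := ⟨n, (hXn t).trans le_sup_right⟩
    have hmem : t ≤ w ⊔ X (sInf {k | t ≤ w ⊔ X k}) := Nat.sInf_mem hne
    refine ⟨sInf {k | t ≤ w ⊔ X k}, hmem, fun m hm hcon => Nat.notMem_of_lt_sInf hm hcon, ?_⟩
    by_contra h0
    have h0' : sInf {k | t ≤ w ⊔ X k} = 0 := by omega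
    rw [h0'] at hmem
    exact hwt.not_ge (hmem.trans (sup_le le_rfl (hX0 w)))
  -- `Y = w ⊔ X (cc - 1)` does not contain `t`
  obtain ⟨Y, hwY, hXY, hYt⟩ : ∃ Y, w ≤ Y ∧ X (cc - 1) ≤ Y ∧ ¬ t ≤ Y :=
    ⟨w ⊔ X (cc - 1), le_sup_left, le_sup_right, hccmin (cc - 1) (by omega)⟩
  -- key: every `u ≤ t` above `w` with `u ≰ Y` contains a join-irreducible of level `cc`
  have key : ∀ u : α, u ≤ t → w ≤ u → ¬ u ≤ Y →
      ∃ j, JoinIrred j ∧ j ≤ u ∧ ¬ j ≤ Y ∧ levAux X j = cc := by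
    intro u hut hwu huY
    obtain ⟨j0, hj0, hj0u, hj0Y⟩ := exists_JI_le huY
    have hne : {m | ∃ j, JoinIrred j ∧ j ≤ u ∧ ¬ j ≤ Y ∧ levAux X j = m}.Nonempty :=
      ⟨levAux X j0, j0, hj0, hj0u, hj0Y, rfl⟩
    have hmem : ∃ j, JoinIrred j ∧ j ≤ u ∧ ¬ j ≤ Y ∧
        levAux X j = sInf {m | ∃ j, JoinIrred j ∧ j ≤ u ∧ ¬ j ≤ Y ∧ levAux X j = m} :=
      Nat.sInf_mem hne
    obtain ⟨j, hj, hju, hjY, hjl⟩ := hmem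
    set l := sInf {m | ∃ j, JoinIrred j ∧ j ≤ u ∧ ¬ j ≤ Y ∧ levAux X j = m} with hldef
    have hlmin : ∀ j' : α, JoinIrred j' → j' ≤ u → ¬ j' ≤ Y → l ≤ levAux X j' := by
      intro j' h1 h2 h3
      rw [hldef]
      exact Nat.sInf_le ⟨j', h1, h2, h3, rfl⟩
    have hcl : cc ≤ l := by
      by_contra hlt
      push_neg at hlt
      have hj1 : j ≤ X (cc - 1) := by
        have hs := hlev_spec j
        rw [hjl] at hs
        exact hs.trans (hXmono (by omega))
      exact hjY (hj1.trans hXY)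
    have hlc : l ≤ cc := by
      by_contra hgt
      push_neg at hgt
      have hjX : j ≤ w ⊔ X (l - 1) :=
        (hju.trans hut).trans (hcc.trans (sup_le_sup_left (hXmono (by omega)) w))
      have hjw : ¬ j ≤ w := fun hh => hjY (hh.trans hwY)
      have hwlt : w < w ⊔ j := left_lt_sup.mpr hjw
      have hLM := hXlm (l - 1) w (w ⊔ j) hwlt
      have hwjle : w ⊔ j ≤ w ⊔ X (l - 1) := sup_le le_sup_left hjX
      have hsup : w ⊔ j = w ⊔ (X (l - 1) ⊓ (w ⊔ j)) := by
        rw [← hLM, inf_eq_right.mpr hwjle]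
      have hhY : ¬ X (l - 1) ⊓ (w ⊔ j) ≤ Y := by
        intro hh
        have hwjY : w ⊔ j ≤ Y := by
          rw [hsup]; exact sup_le hwY hh
        exact hjY (le_sup_right.trans hwjY)
      obtain ⟨j2, hj2, hj2h, hj2Y⟩ := exists_JI_le hhY
      have hj2u : j2 ≤ u := hj2h.trans (inf_le_right.trans (sup_le hwu hju))
      have hj2l : levAux X j2 ≤ l - 1 := hlev_le j2 (l - 1) (hj2h.trans inf_le_left)
      have := hlmin j2 hj2 hj2u hj2Y
      omega
    exact ⟨j, hj, hju, hjY, by omega⟩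
  -- pick two of `a, b, c` not below `Y`
  obtain ⟨u, v, huvw, huvt, huY, hvY, hwu, hwv⟩ :
      ∃ u v : α, u ⊓ v = w ∧ u ⊔ v = t ∧ ¬ u ≤ Y ∧ ¬ v ≤ Y ∧ w ≤ u ∧ w ≤ v := by
    by_cases ha : a ≤ Y
    · refine ⟨b, c, mbc, jbc, fun hbY => hYt ?_, fun hcY => hYt ?_, hwb.le, hwc.le⟩
      · rw [← jab]; exact sup_le ha hbY
      · rw [← jac]; exact sup_le ha hcY
    · by_cases hb : b ≤ Y
      · refine ⟨a, c, mac, jac, ha, fun hcY => hYt ?_, hwa.le, hwc.le⟩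
        rw [← jbc]; exact sup_le hb hcY
      · exact ⟨a, b, mab, jab, ha, hb, hwa.le, hwb.le⟩
  obtain ⟨j1, hj1, hj1u, hj1Y, hl1⟩ := key u (le_sup_left.trans huvt.le) hwu huY
  obtain ⟨j2, hj2, hj2v, hj2Y, hl2⟩ := key v (le_sup_right.trans huvt.le) hwv hvY
  have he : j1 = j2 := lev_inj j1 j2 hj1 hj2 (hl1.trans hl2.symm)
  have hj1w : j1 ≤ w := by
    rw [← huvw]
    exact le_inf hj1u (by rw [he]; exact hj2v)
  exact hj1Y (hj1w.trans hwY)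

/-- A trim lattice contains no sublattice isomorphic to `M₃`: there are no five distinct
elements `w < a, b, c < t` with all pairwise joins of `a, b, c` equal to `t` and all
pairwise meets equal to `w`. -/
theorem no_M3 [Lattice α] [Finite α] (h : Trim α) :
    ¬ ∃ w t a b c : α, a ≠ b ∧ a ≠ c ∧ b ≠ c ∧ w < a ∧ w < b ∧ w < c ∧
      a ⊔ b = t ∧ a ⊔ c = t ∧ b ⊔ c = t ∧ a ⊓ b = w ∧ a ⊓ c = w ∧ b ⊓ c = w := by
  rintro ⟨w, t, a, b, c, -, -, -, hwa, hwb, hwc, jab, jac, jbc, mab, mac, mbc⟩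
  obtain ⟨n, x, hchain, hJIcard, -⟩ := h
  obtain ⟨hbot, htop, hcov, hlm⟩ := hchain
  have hstep : ∀ k : ℕ, k < n →
      x ⟨min k n, Nat.lt_succ_of_le (min_le_right k n)⟩ <
        x ⟨min (k + 1) n, Nat.lt_succ_of_le (min_le_right (k + 1) n)⟩ := by
    intro k hk
    have e1 : (⟨min k n, Nat.lt_succ_of_le (min_le_right k n)⟩ : Fin (n + 1)) =
        (⟨k, hk⟩ : Fin n).castSucc := by
      apply Fin.ext
      show min k n = k
      omega
    have e2 : (⟨min (k + 1) n, Nat.lt_succ_of_le (min_le_right (k + 1) n)⟩ : Fin (n + 1)) =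
        (⟨k, hk⟩ : Fin n).succ := by
      apply Fin.ext
      show min (k + 1) n = k + 1
      omega
    rw [e1, e2]
    exact (hcov ⟨k, hk⟩).lt
  refine main_aux (fun k : ℕ => x ⟨min k n, Nat.lt_succ_of_le (min_le_right k n)⟩)
    ?_ ?_ ?_ hstep ?_ hJIcard hwa hwb hwc jab jac jbc mab mac mbc
  · intro y
    show x ⟨min 0 n, Nat.lt_succ_of_le (min_le_right 0 n)⟩ ≤ y
    have e : (⟨min 0 n, Nat.lt_succ_of_le (min_le_right 0 n)⟩ : Fin (n + 1)) = 0 := by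
      apply Fin.ext
      simp only [Fin.val_zero]
      omega
    rw [e]
    exact hbot y
  · intro y
    show y ≤ x ⟨min n n, Nat.lt_succ_of_le (min_le_right n n)⟩
    have e : (⟨min n n, Nat.lt_succ_of_le (min_le_right n n)⟩ : Fin (n + 1)) = Fin.last n := by
      apply Fin.ext
      simp only [Fin.val_last]
      omega
    rw [e]
    exact htop y
  · apply monotone_nat_of_le_succ
    intro k
    rcases lt_or_ge k n with hk | hk
    · exact (hstep k hk).le
    · show x ⟨min k n, Nat.lt_succ_of_le (min_le_right k n)⟩ ≤
        x ⟨min (k + 1) n, Nat.lt_succ_of_le (min_le_right (k + 1) n)⟩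
      have e : (⟨min k n, Nat.lt_succ_of_le (min_le_right k n)⟩ : Fin (n + 1)) =
          ⟨min (k + 1) n, Nat.lt_succ_of_le (min_le_right (k + 1) n)⟩ := by
        apply Fin.ext
        show min k n = min (k + 1) n
        omega
      rw [e]
  · intro k
    exact hlm _
end

section
/- Every graded trim lattice is distributive. -/
variable {α : Type*}

/-- All maximal (saturated) chains between any two fixed endpoints have the same length. -/
def Graded (α : Type*) [Lattice α] : Prop :=
  ∀ (m k : ℕ) (c : Fin (m + 1) → α) (d : Fin (k + 1) → α),
    (∀ i : Fin m, c i.castSucc ⋖ c i.succ) → (∀ i : Fin k, d i.castSucc ⋖ d i.succ) →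
    c 0 = d 0 → c (Fin.last m) = d (Fin.last k) → m = k

/-!
Let `x` be a maximal chain of length `n`, the number of join- and of meet-irreducibles. Label a
join-irreducible `j` by the step `i` with `j ≤ x (i + 1)`, `j ≰ x i`, and a meet-irreducible `m`
by the step with `x i ≤ m`, `x (i + 1) ≰ m`. Every step carries labels of both kinds and labels
are unique, so with `n` elements of each kind the labellings are bijective: this defines `j i`
and `m i`, and `j i ≰ m i` because `x i ⋖ x (i + 1)`. For every `a`, both `#{i | j i ≤ a}` and
`#{i | a ≰ m i}` increase strictly along covers. A maximal chain through `a` has length `n` by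
gradedness, so the first count is at least the rank of `a` and the second at most the rank of
`a`. The first set is contained in the second, hence they coincide: every `a` lies above `j i`
or below `m i`, which gives distributivity.
-/

open Set

theorem exists_covBy_relSeries [PartialOrder α] [Finite α] {u v : α} (h : u ≤ v) :
    ∃ s : RelSeries {(a, b) : α × α | a ⋖ b}, s.head = u ∧ s.last = v := by
  obtain ⟨f, hf0, n, hfn, hf⟩ := exists_covBy_seq_of_wellFoundedLT_wellFoundedGT_of_le h
  exact ⟨⟨n, fun i ↦ f i, fun i ↦ hf i i.isLt⟩, hf0, hfn⟩

theorem StrictMono.apply_head_add_length_le [Preorder α] {g : α → ℕ} (hg : StrictMono g)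
    (s : RelSeries {(a, b) : α × α | a ⋖ b}) : g s.head + s.length ≤ g s.last :=
  (LTSeries.map ⟨s.length, s, fun i ↦ (s.step i).lt⟩ g hg).head_add_length_le_nat

theorem Fin.eq_of_not_castSucc_of_succ {n : ℕ} {P : Fin (n + 1) → Prop} (hP : Monotone P)
    {i k : Fin n} (hi : ¬ P i.castSucc ∧ P i.succ) (hk : ¬ P k.castSucc ∧ P k.succ) : i = k := by
  by_contra hne
  rcases Ne.lt_or_gt hne with h | h
  · exact hk.1 (hP (Fin.succ_le_castSucc_iff.2 h) hi.2)
  · exact hi.1 (hP (Fin.succ_le_castSucc_iff.2 h) hk.2)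

theorem exists_fin_enum_of_forall_step {n : ℕ} {Q : α → Prop} [Finite {v // Q v}]
    {P : α → Fin (n + 1) → Prop} (hP : ∀ v, Monotone (P v))
    (hstep : ∀ i : Fin n, ∃ v, Q v ∧ ¬ P v i.castSucc ∧ P v i.succ)
    (hQ : Nat.card {v // Q v} ≤ n) :
    ∃ f : Fin n → α, (∀ v, Q v → v ∈ range f) ∧ ∀ i, ¬ P (f i) i.castSucc ∧ P (f i) i.succ := by
  choose f hQf hf using hstep
  refine ⟨f, fun v hv ↦ ?_, hf⟩
  have hinj : Function.Injective fun i ↦ (⟨f i, hQf i⟩ : {v // Q v}) := fun i k hik ↦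
    Fin.eq_of_not_castSucc_of_succ (hP (f i)) (hf i)
      (by simpa only [show f i = f k from congrArg Subtype.val hik] using hf k)
  obtain ⟨i, hi⟩ := (hinj.bijective_of_nat_card_le (by simpa using hQ)).2 ⟨v, hv⟩
  exact ⟨i, congrArg Subtype.val hi⟩

theorem CovBy.not_le_of_not_le_of_le [Lattice α] {a b j m : α} (h : a ⋖ b) (hja : ¬ j ≤ a)
    (hjb : j ≤ b) (ham : a ≤ m) (hbm : ¬ b ≤ m) : ¬ j ≤ m := by
  intro hjm
  have hsup : a ⊔ j = b :=
    (h.eq_or_eq le_sup_left (sup_le h.le hjb)).resolve_left fun e ↦ hja (e ▸ le_sup_right)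
  exact hbm (hsup ▸ sup_le ham hjm)

section FiniteLattice

variable [Lattice α] [Finite α]

theorem le_of_forall_joinIrred_le {a c : α} (h : ∀ j, JoinIrred j → j ≤ a → j ≤ c) : a ≤ c := by
  induction a using WellFoundedLT.induction with
  | ind a ih =>
    by_cases ha : JoinIrred a
    · exact h a ha le_rfl
    obtain hbot | ⟨b, d, hb, hd, rfl⟩ : IsBot a ∨ ∃ b d, b < a ∧ d < a ∧ b ⊔ d = a := by
      simpa [JoinIrred, imp_iff_not_or] using ha
    · exact hbot c
    · exact sup_le (ih b hb fun j hj hjb ↦ h j hj (hjb.trans le_sup_left))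
        (ih d hd fun j hj hjd ↦ h j hj (hjd.trans le_sup_right))

theorem le_of_forall_meetIrred_le {a c : α} (h : ∀ m, MeetIrred m → a ≤ m → c ≤ m) : c ≤ a :=
  le_of_forall_joinIrred_le (α := αᵒᵈ) h

theorem exists_joinIrred_le_and_not_le_of_lt {a b : α} (h : a < b) :
    ∃ j, JoinIrred j ∧ j ≤ b ∧ ¬ j ≤ a := by
  by_contra! hcon
  exact h.not_ge (le_of_forall_joinIrred_le hcon)

theorem exists_meetIrred_le_and_not_le_of_lt {a b : α} (h : a < b) :
    ∃ m, MeetIrred m ∧ a ≤ m ∧ ¬ b ≤ m := by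
  by_contra! hcon
  exact h.not_ge (le_of_forall_meetIrred_le hcon)

theorem inf_sup_eq_of_forall_joinIrred_exists
    (h : ∀ j, JoinIrred j → ∃ m : α, ¬ j ≤ m ∧ ∀ a, j ≤ a ∨ a ≤ m) (a b c : α) :
    a ⊓ (b ⊔ c) = a ⊓ b ⊔ a ⊓ c := by
  refine le_antisymm (le_of_forall_joinIrred_le fun j hj hjle ↦ ?_) le_inf_sup
  have hja : j ≤ a := hjle.trans inf_le_left
  obtain ⟨m, hjm, hsplit⟩ := h j hj
  rcases hsplit b with hjb | hbm
  · exact le_sup_of_le_left (le_inf hja hjb)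
  rcases hsplit c with hjc | hcm
  · exact le_sup_of_le_right (le_inf hja hjc)
  exact absurd ((hjle.trans inf_le_right).trans (sup_le hbm hcm)) hjm

theorem StrictMono.exists_enum_joinIrred {n : ℕ} {x : Fin (n + 1) → α} (hx : StrictMono x)
    (hcard : Nat.card {v : α // JoinIrred v} ≤ n) :
    ∃ j : Fin n → α, (∀ v, JoinIrred v → v ∈ range j) ∧
      ∀ i, ¬ j i ≤ x i.castSucc ∧ j i ≤ x i.succ := by
  have hstep (i : Fin n) : ∃ v, JoinIrred v ∧ ¬ v ≤ x i.castSucc ∧ v ≤ x i.succ := by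
    obtain ⟨v, hv, hvs, hvc⟩ := exists_joinIrred_le_and_not_le_of_lt (hx i.castSucc_lt_succ)
    exact ⟨v, hv, hvc, hvs⟩
  exact exists_fin_enum_of_forall_step (P := fun v k ↦ v ≤ x k)
    (fun v _ _ hk hv ↦ hv.trans (hx.monotone hk)) hstep hcard

theorem StrictMono.exists_enum_meetIrred {n : ℕ} {x : Fin (n + 1) → α} (hx : StrictMono x)
    (hcard : Nat.card {v : α // MeetIrred v} ≤ n) :
    ∃ m : Fin n → α, (∀ v, MeetIrred v → v ∈ range m) ∧
      ∀ i, x i.castSucc ≤ m i ∧ ¬ x i.succ ≤ m i := by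
  have hstep (i : Fin n) : ∃ v, MeetIrred v ∧ ¬ ¬ x i.castSucc ≤ v ∧ ¬ x i.succ ≤ v := by
    obtain ⟨v, hv, hcv, hsv⟩ := exists_meetIrred_le_and_not_le_of_lt (hx i.castSucc_lt_succ)
    exact ⟨v, hv, not_not.2 hcv, hsv⟩
  obtain ⟨m, hm, hmx⟩ := exists_fin_enum_of_forall_step (P := fun v k ↦ ¬ x k ≤ v)
    (fun v _ _ hk hv hkv ↦ hv ((hx.monotone hk).trans hkv)) hstep hcard
  exact ⟨m, hm, fun i ↦ ⟨not_not.1 (hmx i).1, (hmx i).2⟩⟩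

variable {ι : Type*} [Finite ι]

theorem strictMono_ncard_le {f : ι → α} (hf : ∀ j, JoinIrred j → j ∈ range f) :
    StrictMono fun a ↦ {i | f i ≤ a}.ncard := by
  intro a b hab
  obtain ⟨_, hj, hjb, hja⟩ := exists_joinIrred_le_and_not_le_of_lt hab
  obtain ⟨i, rfl⟩ := hf _ hj
  exact ncard_lt_ncard <| (ssubset_iff_of_subset fun k hk ↦ le_trans hk hab.le).2 ⟨i, hjb, hja⟩

theorem strictMono_ncard_not_le {f : ι → α} (hf : ∀ m, MeetIrred m → m ∈ range f) :
    StrictMono fun a ↦ {i | ¬ a ≤ f i}.ncard := by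
  intro a b hab
  obtain ⟨_, hm, ham, hbm⟩ := exists_meetIrred_le_and_not_le_of_lt hab
  obtain ⟨i, rfl⟩ := hf _ hm
  refine ncard_lt_ncard <| (ssubset_iff_of_subset ?_).2 ⟨i, hbm, not_not.2 ham⟩
  exact fun k (hk : ¬ a ≤ f k) hbk ↦ hk (hab.le.trans hbk)

theorem le_or_le_of_graded (hgr : Graded α) {n : ℕ} {x : Fin (n + 1) → α} (hx0 : IsBot (x 0))
    (hxn : IsTop (x (Fin.last n))) (hx : ∀ i : Fin n, x i.castSucc ⋖ x i.succ)
    (hι : Nat.card ι ≤ n) {j m : ι → α} (hj : ∀ v, JoinIrred v → v ∈ range j)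
    (hm : ∀ v, MeetIrred v → v ∈ range m) (hjm : ∀ i, ¬ j i ≤ m i) (a : α) (i : ι) :
    j i ≤ a ∨ a ≤ m i := by
  obtain ⟨s, hs0, hsa⟩ := exists_covBy_relSeries (hx0 a)
  obtain ⟨t, hta, htn⟩ := exists_covBy_relSeries (hxn a)
  have hlen : s.length + t.length = n :=
    hgr _ _ _ x (s.smash t (hsa.trans hta.symm)).step hx ((RelSeries.head_smash _).trans hs0)
      ((RelSeries.last_smash _).trans htn)
  have hlower := (strictMono_ncard_le hj).apply_head_add_length_le s
  have hupper := (strictMono_ncard_not_le hm).apply_head_add_length_le t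
  have hmax := (ncard_le_card {k | ¬ t.last ≤ m k}).trans hι
  rw [hsa] at hlower
  rw [hta] at hupper
  have hsub : {k | j k ≤ a} ⊆ {k | ¬ a ≤ m k} := fun k hk ham ↦ hjm k (hk.trans ham)
  have heq := eq_of_subset_of_ncard_le hsub (by omega)
  by_contra! h
  exact h.1 (heq ▸ h.2 : i ∈ {k | j k ≤ a})

end FiniteLattice

/-- Every graded trim lattice is distributive. -/
theorem graded_trim_distributive [Lattice α] [Finite α] (htrim : Trim α) (hgr : Graded α) :
    ∀ a b c : α, a ⊓ (b ⊔ c) = (a ⊓ b) ⊔ (a ⊓ c) := by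
  obtain ⟨n, x, ⟨hx0, hxn, hx, -⟩, hJ, hM⟩ := htrim
  have hxmono : StrictMono x := Fin.strictMono_iff_lt_succ.2 fun i ↦ (hx i).lt
  obtain ⟨j, hjJ, hjx⟩ := hxmono.exists_enum_joinIrred hJ.le
  obtain ⟨m, hmM, hmx⟩ := hxmono.exists_enum_meetIrred hM.le
  have hjm : ∀ i, ¬ j i ≤ m i := fun i ↦
    (hx i).not_le_of_not_le_of_le (hjx i).1 (hjx i).2 (hmx i).1 (hmx i).2
  refine inf_sup_eq_of_forall_joinIrred_exists fun v hv ↦ ?_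
  obtain ⟨i, rfl⟩ := hjJ v hv
  exact ⟨m i, hjm i, fun a ↦ le_or_le_of_graded hgr hx0 hxn hx (by simp) hjJ hmM hjm a i⟩
end

section
/- If L is a trim lattice and K is a sublattice of L containing a left modular maximal chain of L witnessing trimness, then K is trim. -/
variable {α : Type*}

section Aux
variable [Lattice α]

lemma exists_joinIrred_le [Finite α] {u : α} :
    ∀ v : α, ¬ v ≤ u → ∃ j : α, JoinIrred j ∧ j ≤ v ∧ ¬ j ≤ u := by
  intro v
  induction v using WellFoundedLT.induction with
  | ind v ih =>
    intro h
    by_cases hv : JoinIrred v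
    · exact ⟨v, hv, le_rfl, h⟩
    · rw [JoinIrred, not_and_or, not_not] at hv
      rcases hv with hb | hv
      · exact absurd (hb u) h
      · push_neg at hv
        obtain ⟨b, c, hb, hc, he⟩ := hv
        by_cases hbu : b ≤ u
        · have hcu : ¬ c ≤ u := fun hcu => h (he ▸ sup_le hbu hcu)
          obtain ⟨j, h1, h2, h3⟩ := ih c hc hcu
          exact ⟨j, h1, h2.trans hc.le, h3⟩
        · obtain ⟨j, h1, h2, h3⟩ := ih b hb hbu
          exact ⟨j, h1, h2.trans hb.le, h3⟩

lemma exists_meetIrred_le [Finite α] {u : α} :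
    ∀ v : α, ¬ u ≤ v → ∃ m : α, MeetIrred m ∧ v ≤ m ∧ ¬ u ≤ m := by
  intro v
  induction v using WellFoundedGT.induction with
  | ind v ih =>
    intro h
    by_cases hv : MeetIrred v
    · exact ⟨v, hv, le_rfl, h⟩
    · rw [MeetIrred, not_and_or, not_not] at hv
      rcases hv with hb | hv
      · exact absurd (hb u) h
      · push_neg at hv
        obtain ⟨b, c, hb, hc, he⟩ := hv
        by_cases hbu : u ≤ b
        · have hcu : ¬ u ≤ c := fun hcu => h (he ▸ le_inf hbu hcu)
          obtain ⟨j, h1, h2, h3⟩ := ih c hc hcu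
          exact ⟨j, h1, hc.le.trans h2, h3⟩
        · obtain ⟨j, h1, h2, h3⟩ := ih b hb hbu
          exact ⟨j, h1, hb.le.trans h2, h3⟩

end Aux

section Slot
variable [Lattice α]

lemma exists_up_slot {n : ℕ} {x : Fin (n + 1) → α} {v : α}
    (h0 : ¬ v ≤ x 0) (hn : v ≤ x (Fin.last n)) :
    ∃ i : Fin n, ¬ v ≤ x i.castSucc ∧ v ≤ x i.succ := by
  have H : ∀ m : ℕ, ∀ hm : m < n + 1, v ≤ x ⟨m, hm⟩ →
      ∃ i : Fin n, ¬ v ≤ x i.castSucc ∧ v ≤ x i.succ := by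
    intro m
    induction m with
    | zero =>
      intro hm h
      rw [Fin.mk_zero] at h
      exact absurd h h0
    | succ m ih =>
      intro hm h
      by_cases h' : v ≤ x ⟨m, by omega⟩
      · exact ih _ h'
      · refine ⟨⟨m, by omega⟩, ?_, ?_⟩
        · simpa [Fin.castSucc_mk] using h'
        · simpa [Fin.succ_mk] using h
  exact H n n.lt_succ_self hn

lemma exists_down_slot {n : ℕ} {x : Fin (n + 1) → α} {v : α}
    (h0 : x 0 ≤ v) (hn : ¬ x (Fin.last n) ≤ v) :
    ∃ i : Fin n, x i.castSucc ≤ v ∧ ¬ x i.succ ≤ v := by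
  have H : ∀ m : ℕ, ∀ hm : m < n + 1, ¬ x ⟨m, hm⟩ ≤ v →
      ∃ i : Fin n, x i.castSucc ≤ v ∧ ¬ x i.succ ≤ v := by
    intro m
    induction m with
    | zero =>
      intro hm h
      rw [Fin.mk_zero] at h
      exact absurd h0 h
    | succ m ih =>
      intro hm h
      by_cases h' : x ⟨m, by omega⟩ ≤ v
      · refine ⟨⟨m, by omega⟩, ?_, ?_⟩
        · simpa [Fin.castSucc_mk] using h'
        · simpa [Fin.succ_mk] using h
      · exact ih _ h'
  exact H n n.lt_succ_self hn

lemma up_slot_unique {n : ℕ} {x : Fin (n + 1) → α} (hmono : Monotone x) {v : α} {i i' : Fin n}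
    (h1 : ¬ v ≤ x i.castSucc) (h2 : v ≤ x i.succ)
    (h1' : ¬ v ≤ x i'.castSucc) (h2' : v ≤ x i'.succ) : i = i' := by
  rcases lt_trichotomy i i' with h | h | h
  · exact absurd (h2.trans (hmono (Fin.succ_le_castSucc_iff.mpr h))) h1'
  · exact h
  · exact absurd (h2'.trans (hmono (Fin.succ_le_castSucc_iff.mpr h))) h1

lemma down_slot_unique {n : ℕ} {x : Fin (n + 1) → α} (hmono : Monotone x) {v : α} {i i' : Fin n}
    (h1 : x i.castSucc ≤ v) (h2 : ¬ x i.succ ≤ v)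
    (h1' : x i'.castSucc ≤ v) (h2' : ¬ x i'.succ ≤ v) : i = i' := by
  rcases lt_trichotomy i i' with h | h | h
  · exact absurd ((hmono (Fin.succ_le_castSucc_iff.mpr h)).trans h1') h2
  · exact h
  · exact absurd ((hmono (Fin.succ_le_castSucc_iff.mpr h)).trans h1) h2'

end Slot

section Count
variable [Lattice α] [Finite α]

lemma card_joinIrred_sub (K : Sublattice α) {n : ℕ} {x : Fin (n + 1) → α}
    (h0 : IsBot (x 0)) (hn : IsTop (x (Fin.last n)))
    (hcov : ∀ i : Fin n, x i.castSucc ⋖ x i.succ)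
    (hlm : ∀ i, LeftModular (x i))
    (hJ : Nat.card {v : α // JoinIrred v} = n)
    (hmem : ∀ i, x i ∈ K) :
    Nat.card {v : K // JoinIrred v} = n := by
  have hmono : Monotone x :=
    (Fin.strictMono_iff_lt_succ.mpr fun i => (hcov i).lt).monotone
  -- slot map on join-irreducibles of α
  have slotL : ∀ j : {j : α // JoinIrred j},
      ∃ i : Fin n, ¬ (j : α) ≤ x i.castSucc ∧ (j : α) ≤ x i.succ := by
    rintro ⟨j, hj⟩
    exact exists_up_slot (fun hle => hj.1 fun a => hle.trans (h0 a)) (hn j)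
  choose ΦL hΦL1 hΦL2 using slotL
  have ΦLsurj : Function.Surjective ΦL := by
    intro i
    obtain ⟨j, hj, hle, hnle⟩ := exists_joinIrred_le _ (hcov i).lt.not_ge
    exact ⟨⟨j, hj⟩, up_slot_unique hmono (hΦL1 _) (hΦL2 _) hnle hle⟩
  have ΦLinj : Function.Injective ΦL := by
    haveI : Fintype {j : α // JoinIrred j} := Fintype.ofFinite _
    have hcard : Fintype.card {j : α // JoinIrred j} = n := by
      rw [← Nat.card_eq_fintype_card, hJ]
    have e := Fintype.equivFinOfCardEq hcard
    have hs : Function.Surjective (ΦL ∘ e.symm) := ΦLsurj.comp e.symm.surjective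
    have hi : Function.Injective (ΦL ∘ e.symm) := Finite.injective_iff_surjective.mpr hs
    have hΦL : ΦL = (ΦL ∘ e.symm) ∘ e := by ext j; simp
    rw [hΦL]
    exact hi.comp e.injective
  have keyL : ∀ (i : Fin n) (j j' : α), JoinIrred j → JoinIrred j' →
      ¬ j ≤ x i.castSucc → j ≤ x i.succ → ¬ j' ≤ x i.castSucc → j' ≤ x i.succ → j = j' := by
    intro i j j' hj hj' a1 a2 b1 b2
    have h1 : ΦL ⟨j, hj⟩ = i := up_slot_unique hmono (hΦL1 _) (hΦL2 _) a1 a2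
    have h2 : ΦL ⟨j', hj'⟩ = i := up_slot_unique hmono (hΦL1 _) (hΦL2 _) b1 b2
    have := ΦLinj (h1.trans h2.symm)
    exact congrArg Subtype.val this
  -- the key step: two join-irreducibles of K in the same slot are equal
  have main : ∀ (v w : K), JoinIrred v → JoinIrred w → ∀ i : Fin n,
      ¬ (v : α) ≤ x i.castSucc → (v : α) ≤ x i.succ →
      ¬ (w : α) ≤ x i.castSucc → (w : α) ≤ x i.succ → ¬ (v : α) ≤ (w : α) → False := by
    intro v w hv hw i a1 a2 b1 b2 hvw
    obtain ⟨j, hj, hjv, hjc⟩ := exists_joinIrred_le _ a1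
    obtain ⟨j', hj', hjw, hjc'⟩ := exists_joinIrred_le _ b1
    have hjj : j = j' := keyL i j j' hj hj' hjc (hjv.trans a2) hjc' (hjw.trans b2)
    subst hjj
    have hjvw : j ≤ (v : α) ⊓ (w : α) := le_inf hjv hjw
    have hnotle : ¬ ((v : α) ⊓ (w : α)) ≤ x i.castSucc := fun hle => hjc (hjvw.trans hle)
    have hlt : x i.castSucc < ((v : α) ⊓ (w : α)) ⊔ x i.castSucc :=
      lt_of_le_of_ne le_sup_right fun he => hnotle (le_sup_left.trans he.symm.le)
    have hle2 : ((v : α) ⊓ (w : α)) ⊔ x i.castSucc ≤ x i.succ :=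
      sup_le (inf_le_left.trans a2) (hcov i).le
    have hsup : ((v : α) ⊓ (w : α)) ⊔ x i.castSucc = x i.succ := by
      rcases hle2.lt_or_eq with h | h
      · exact absurd h ((hcov i).2 hlt)
      · exact h
    have hyz : (v : α) ⊓ (w : α) < (v : α) := by
      refine inf_le_left.lt_of_ne fun he => hvw ?_
      conv_lhs => rw [← he]
      exact inf_le_right
    have hLM := hlm i.castSucc ((v : α) ⊓ (w : α)) (v : α) hyz
    rw [hsup] at hLM
    have hveq : (v : α) = ((v : α) ⊓ (w : α)) ⊔ (x i.castSucc ⊓ (v : α)) := by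
      rw [← hLM, inf_eq_right.mpr a2]
    set A : K := v ⊓ w with hA
    set B : K := (⟨x i.castSucc, hmem _⟩ : K) ⊓ v with hB
    refine hv.2 A B ?_ ?_ ?_
    · show A < v
      refine lt_of_le_of_ne inf_le_left fun he => ?_
      exact hyz.ne (congrArg Subtype.val he)
    · show B < v
      refine lt_of_le_of_ne inf_le_right fun he => ?_
      have : (v : α) ≤ x i.castSucc := by
        have := congrArg Subtype.val he
        rw [hB] at this
        simp only [Sublattice.coe_inf] at this
        rw [← this]
        exact inf_le_left
      exact a1 this
    · apply Subtype.ext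
      rw [hA, hB]
      simp only [Sublattice.coe_sup, Sublattice.coe_inf]
      exact hveq.symm
  -- slot map on join-irreducibles of K
  have slotK : ∀ v : {v : K // JoinIrred v},
      ∃ i : Fin n, ¬ ((v : K) : α) ≤ x i.castSucc ∧ ((v : K) : α) ≤ x i.succ := by
    rintro ⟨⟨v, hvK⟩, hv⟩
    refine exists_up_slot ?_ (hn v)
    intro hle
    exact hv.1 fun w => show v ≤ (w : α) from hle.trans (h0 (w : α))
  choose ΨK hΨ1 hΨ2 using slotK
  have Ψinj : Function.Injective ΨK := by
    intro a b hab
    by_contra hne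
    have h1b := hΨ1 b; have h2b := hΨ2 b
    rw [← hab] at h1b h2b
    have hvw : ¬ ((a : K) : α) ≤ ((b : K) : α) ∨ ¬ ((b : K) : α) ≤ ((a : K) : α) := by
      by_contra hc
      push_neg at hc
      exact hne (Subtype.ext (Subtype.ext (le_antisymm hc.1 hc.2)))
    rcases hvw with h | h
    · exact main a b a.2 b.2 (ΨK a) (hΨ1 a) (hΨ2 a) h1b h2b h
    · exact main b a b.2 a.2 (ΨK a) h1b h2b (hΨ1 a) (hΨ2 a) h
  have Ψsurj : Function.Surjective ΨK := by
    intro i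
    have hK : ¬ (⟨x i.succ, hmem _⟩ : K) ≤ ⟨x i.castSucc, hmem _⟩ :=
      fun h => (hcov i).lt.not_ge h
    obtain ⟨j, hj, hle, hnle⟩ := exists_joinIrred_le (α := K) _ hK
    refine ⟨⟨j, hj⟩, up_slot_unique hmono (hΨ1 _) (hΨ2 _) ?_ ?_⟩
    · exact fun h => hnle h
    · exact hle
  have := Nat.card_eq_of_bijective ΨK ⟨Ψinj, Ψsurj⟩
  simpa using this

end Count

section Count2
variable [Lattice α] [Finite α]

lemma card_meetIrred_sub (K : Sublattice α) {n : ℕ} {x : Fin (n + 1) → α}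
    (h0 : IsBot (x 0)) (hn : IsTop (x (Fin.last n)))
    (hcov : ∀ i : Fin n, x i.castSucc ⋖ x i.succ)
    (hlm : ∀ i, LeftModular (x i))
    (hM : Nat.card {v : α // MeetIrred v} = n)
    (hmem : ∀ i, x i ∈ K) :
    Nat.card {v : K // MeetIrred v} = n := by
  have hmono : Monotone x :=
    (Fin.strictMono_iff_lt_succ.mpr fun i => (hcov i).lt).monotone
  have slotL : ∀ m : {m : α // MeetIrred m},
      ∃ i : Fin n, x i.castSucc ≤ (m : α) ∧ ¬ x i.succ ≤ (m : α) := by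
    rintro ⟨m, hm⟩
    exact exists_down_slot (h0 m) (fun hle => hm.1 fun a => (hn a).trans hle)
  choose ΦL hΦL1 hΦL2 using slotL
  have ΦLsurj : Function.Surjective ΦL := by
    intro i
    obtain ⟨m, hm, hle, hnle⟩ := exists_meetIrred_le _ (hcov i).lt.not_ge
    exact ⟨⟨m, hm⟩, down_slot_unique hmono (hΦL1 _) (hΦL2 _) hle hnle⟩
  have ΦLinj : Function.Injective ΦL := by
    haveI : Fintype {m : α // MeetIrred m} := Fintype.ofFinite _
    have hcard : Fintype.card {m : α // MeetIrred m} = n := by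
      rw [← Nat.card_eq_fintype_card, hM]
    have e := Fintype.equivFinOfCardEq hcard
    have hs : Function.Surjective (ΦL ∘ e.symm) := ΦLsurj.comp e.symm.surjective
    have hi : Function.Injective (ΦL ∘ e.symm) := Finite.injective_iff_surjective.mpr hs
    have hΦL : ΦL = (ΦL ∘ e.symm) ∘ e := by ext j; simp
    rw [hΦL]
    exact hi.comp e.injective
  have keyL : ∀ (i : Fin n) (m m' : α), MeetIrred m → MeetIrred m' →
      x i.castSucc ≤ m → ¬ x i.succ ≤ m → x i.castSucc ≤ m' → ¬ x i.succ ≤ m' → m = m' := by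
    intro i m m' hm hm' a1 a2 b1 b2
    have h1 : ΦL ⟨m, hm⟩ = i := down_slot_unique hmono (hΦL1 _) (hΦL2 _) a1 a2
    have h2 : ΦL ⟨m', hm'⟩ = i := down_slot_unique hmono (hΦL1 _) (hΦL2 _) b1 b2
    have := ΦLinj (h1.trans h2.symm)
    exact congrArg Subtype.val this
  have main : ∀ (v w : K), MeetIrred v → MeetIrred w → ∀ i : Fin n,
      x i.castSucc ≤ (v : α) → ¬ x i.succ ≤ (v : α) →
      x i.castSucc ≤ (w : α) → ¬ x i.succ ≤ (w : α) → ¬ (w : α) ≤ (v : α) → False := by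
    intro v w hv hw i a1 a2 b1 b2 hvw
    obtain ⟨m, hm, hmv, hmc⟩ := exists_meetIrred_le _ a2
    obtain ⟨m', hm', hmw, hmc'⟩ := exists_meetIrred_le _ b2
    have hmm : m = m' := keyL i m m' hm hm' (a1.trans hmv) hmc (b1.trans hmw) hmc'
    subst hmm
    have hmvw : (v : α) ⊔ (w : α) ≤ m := sup_le hmv hmw
    have hnotle : ¬ x i.succ ≤ ((v : α) ⊔ (w : α)) := fun hle => hmc (hle.trans hmvw)
    have hlt : ((v : α) ⊔ (w : α)) ⊓ x i.succ < x i.succ :=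
      lt_of_le_of_ne inf_le_right fun he => hnotle (he.symm.le.trans inf_le_left)
    have hle2 : x i.castSucc ≤ ((v : α) ⊔ (w : α)) ⊓ x i.succ :=
      le_inf (a1.trans le_sup_left) (hcov i).le
    have hinf : ((v : α) ⊔ (w : α)) ⊓ x i.succ = x i.castSucc := by
      rcases hle2.lt_or_eq with h | h
      · exact absurd hlt ((hcov i).2 h)
      · exact h.symm
    have hyz : (v : α) < (v : α) ⊔ (w : α) := by
      refine le_sup_left.lt_of_ne fun he => hvw ?_
      conv_rhs => rw [he]
      exact le_sup_right
    have hLM := hlm i.succ (v : α) ((v : α) ⊔ (w : α)) hyz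
    rw [inf_comm (x i.succ) ((v : α) ⊔ (w : α)), hinf, sup_eq_left.mpr a1] at hLM
    set A : K := v ⊔ (⟨x i.succ, hmem _⟩ : K) with hA
    set B : K := v ⊔ w with hB
    refine hv.2 A B ?_ ?_ ?_
    · show v < A
      refine lt_of_le_of_ne le_sup_left fun he => ?_
      have : x i.succ ≤ (v : α) := by
        have := congrArg Subtype.val he
        rw [hA] at this
        simp only [Sublattice.coe_sup] at this
        rw [this]
        exact le_sup_right
      exact a2 this
    · show v < B
      refine lt_of_le_of_ne le_sup_left fun he => ?_
      exact hyz.ne (congrArg Subtype.val he)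
    · apply Subtype.ext
      rw [hA, hB]
      simp only [Sublattice.coe_inf, Sublattice.coe_sup]
      exact hLM
  have slotK : ∀ v : {v : K // MeetIrred v},
      ∃ i : Fin n, x i.castSucc ≤ ((v : K) : α) ∧ ¬ x i.succ ≤ ((v : K) : α) := by
    rintro ⟨⟨v, hvK⟩, hv⟩
    refine exists_down_slot (h0 v) ?_
    intro hle
    exact hv.1 fun w => show (w : α) ≤ v from (hn (w : α)).trans hle
  choose ΨK hΨ1 hΨ2 using slotK
  have Ψinj : Function.Injective ΨK := by
    intro a b hab
    by_contra hne
    have h1b := hΨ1 b; have h2b := hΨ2 b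
    rw [← hab] at h1b h2b
    have hvw : ¬ ((a : K) : α) ≤ ((b : K) : α) ∨ ¬ ((b : K) : α) ≤ ((a : K) : α) := by
      by_contra hc
      push_neg at hc
      exact hne (Subtype.ext (Subtype.ext (le_antisymm hc.1 hc.2)))
    rcases hvw with h | h
    · exact main b a b.2 a.2 (ΨK a) h1b h2b (hΨ1 a) (hΨ2 a) h
    · exact main a b a.2 b.2 (ΨK a) (hΨ1 a) (hΨ2 a) h1b h2b h
  have Ψsurj : Function.Surjective ΨK := by
    intro i
    have hK : ¬ (⟨x i.succ, hmem _⟩ : K) ≤ ⟨x i.castSucc, hmem _⟩ :=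
      fun h => (hcov i).lt.not_ge h
    obtain ⟨m, hm, hle, hnle⟩ := exists_meetIrred_le (α := K) _ hK
    refine ⟨⟨m, hm⟩, down_slot_unique hmono (hΨ1 _) (hΨ2 _) ?_ ?_⟩
    · exact hle
    · exact fun h => hnle h
  have := Nat.card_eq_of_bijective ΨK ⟨Ψinj, Ψsurj⟩
  simpa using this

end Count2

/-- A sublattice of a trim lattice containing a left modular maximal chain
witnessing trimness is itself trim. -/
theorem sublattice_trim [Lattice α] [Finite α] (K : Sublattice α) {n : ℕ}
    (x : Fin (n + 1) → α) (hx : IsLMChain x)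
    (hJ : Nat.card {v : α // JoinIrred v} = n)
    (hM : Nat.card {v : α // MeetIrred v} = n)
    (hmem : ∀ i, x i ∈ K) :
    Trim K := by
  obtain ⟨h0, hn, hcov, hlm⟩ := hx
  refine ⟨n, fun i => ⟨x i, hmem i⟩, ⟨?_, ?_, ?_, ?_⟩, ?_, ?_⟩
  · intro a
    exact show x 0 ≤ (a : α) from h0 (a : α)
  · intro a
    exact show (a : α) ≤ x (Fin.last n) from hn (a : α)
  · intro i
    constructor
    · exact show x i.castSucc < x i.succ from (hcov i).lt
    · intro c h1 h2
      exact (hcov i).2 (show x i.castSucc < (c : α) from h1)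
        (show (c : α) < x i.succ from h2)
  · intro i y z hyz
    apply Subtype.ext
    simp only [Sublattice.coe_inf, Sublattice.coe_sup]
    exact hlm i (y : α) (z : α) (show (y : α) < (z : α) from hyz)
  · exact card_joinIrred_sub K h0 hn hcov hlm hJ hmem
  · exact card_meetIrred_sub K h0 hn hcov hlm hM hmem
end

section
/- The spine of a trim lattice L (the set of elements lying on some chain of maximum length) is closed under the meet and join of L, i.e., it is a sublattice of L. -/
variable {α : Type*}

/-- The spine of a finite lattice: elements lying on some chain of maximum length. -/
def Spine [Lattice α] [Finite α] (a : α) : Prop :=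
  ∃ C : Set α, a ∈ C ∧ IsChain (· ≤ ·) C ∧
    ∀ D : Set α, IsChain (· ≤ ·) D → D.ncard ≤ C.ncard

/-!
Each step `x < y` of a chain is separated by a meet-irreducible `m` (with `x ≤ m`, `y ≰ m`), and
along a chain these are distinct; so chains have at most `#MI + 1` elements, and in a trim lattice
the spine is the set of elements on chains of exactly that size. Given such chains through `a` and
through `b`, follow the first up to `a` and then the image of the second under `a ⊔ ·`. The part of
the first chain above `a` has at most `#{m ∈ MI | a ≤ m} + 1` elements, while every step of the
second chain collapsed by `a ⊔ ·` is separated by a meet-irreducible not above `a`; counting, the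
new chain through `a ⊔ b` again has `#MI + 1` elements. Meets follow by order duality, which
exchanges join- and meet-irreducibles, using that a trim lattice also has `#JI + 1` as the maximal
chain size.
-/

open Set Function OrderDual

section MeetIrred

variable [Lattice α]

theorem exists_meetIrred_of_not_le [WellFoundedGT α] {a c : α} (h : ¬ c ≤ a) :
    ∃ m, MeetIrred m ∧ a ≤ m ∧ ¬ c ≤ m := by
  induction a using WellFoundedGT.induction with
  | _ a ih =>
    by_cases hirr : MeetIrred a
    · exact ⟨a, hirr, le_rfl, h⟩
    have htop : ¬ IsTop a := fun ha => h (ha c)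
    obtain ⟨u, hu, v, hv, rfl⟩ : ∃ u, a < u ∧ ∃ v, a < v ∧ u ⊓ v = a := by
      simpa [MeetIrred, htop] using hirr
    have huv : ¬ c ≤ u ∨ ¬ c ≤ v := not_and_or.mp fun ⟨hcu, hcv⟩ => h (le_inf hcu hcv)
    rcases huv with hcu | hcv
    · obtain ⟨m, hm, hum, hcm⟩ := ih u hu hcu
      exact ⟨m, hm, hu.le.trans hum, hcm⟩
    · obtain ⟨m, hm, hvm, hcm⟩ := ih v hv hcv
      exact ⟨m, hm, hv.le.trans hvm, hcm⟩

theorem StrictMono.exists_meetIrred_steps [WellFoundedGT α] {M : ℕ} {f : Fin (M + 1) → α}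
    (hf : StrictMono f) : ∃ m : Fin M → α, Injective m ∧
      ∀ i, MeetIrred (m i) ∧ f i.castSucc ≤ m i ∧ ¬ f i.succ ≤ m i := by
  choose m hm using fun i : Fin M => exists_meetIrred_of_not_le (hf i.castSucc_lt_succ).not_ge
  refine ⟨m, Injective.of_lt_imp_ne fun i j hij hmij => (hm i).2.2 ?_, hm⟩
  calc f i.succ ≤ f j.castSucc := hf.monotone (Fin.castSucc_lt_iff_succ_le.mp hij)
    _ ≤ m j := (hm j).2.1
    _ = m i := hmij.symm

end MeetIrred

theorem IsChain.exists_strictMono_fin [PartialOrder α] {C : Set α} (hC : IsChain (· ≤ ·) C)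
    {M : ℕ} (hCM : C.ncard = M + 1) : ∃ f : Fin (M + 1) → α, StrictMono f ∧ range f = C := by
  classical
  let _ := hC.linearOrder
  have := (finite_of_ncard_ne_zero (s := C) (by omega)).fintype
  let e := monoEquivOfFin C (by rw [← Nat.card_eq_fintype_card, Nat.card_coe_set_eq, hCM])
  refine ⟨fun i => e i, fun i j hij => e.strictMono hij, ?_⟩
  change range (Subtype.val ∘ e) = C
  rw [range_comp, e.range_eq, image_univ, Subtype.range_coe]

theorem Monotone.add_one_le_ncard_range_add [PartialOrder α] {M : ℕ} {q : Fin (M + 1) → α}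
    (hq : Monotone q) :
    M + 1 ≤ (range q).ncard + {i : Fin M | q i.castSucc = q i.succ}.ncard := by
  set T := {i : Fin M | q i.castSucc = q i.succ}
  have hstrict : StrictMonoOn q (Fin.castSucc '' T)ᶜ := by
    intro j hj j' _ hjj'
    obtain ⟨i, rfl⟩ := Fin.exists_castSucc_eq.mpr (hjj'.trans_le j'.le_last).ne
    have hi : q i.castSucc ≠ q i.succ := fun h => hj ⟨i, h, rfl⟩
    exact ((hq i.castSucc_le_succ).lt_of_ne hi).trans_le
      (hq (Fin.castSucc_lt_iff_succ_le.mp hjj'))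
  calc M + 1 = (Fin.castSucc '' T).ncard + (Fin.castSucc '' T)ᶜ.ncard := by
        rw [ncard_add_ncard_compl, Nat.card_fin]
    _ = T.ncard + (q '' (Fin.castSucc '' T)ᶜ).ncard := by
        rw [ncard_image_of_injective _ (Fin.castSucc_injective M), hstrict.injOn.ncard_image]
    _ ≤ (range q).ncard + T.ncard := by
        rw [add_comm]
        exact Nat.add_le_add_right (ncard_le_ncard (image_subset_range _ _) (finite_range q)) _

section Finite

variable [Lattice α] [Finite α]

theorem IsChain.ncard_le_ncard_meetIrred_add_one {C : Set α} (hC : IsChain (· ≤ ·) C) {a : α}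
    (haC : ∀ x ∈ C, a ≤ x) : C.ncard ≤ {m | MeetIrred m ∧ a ≤ m}.ncard + 1 := by
  rcases hCM : C.ncard with _ | M
  · omega
  obtain ⟨f, hf, rfl⟩ := hC.exists_strictMono_fin hCM
  obtain ⟨m, hm_inj, hm⟩ := hf.exists_meetIrred_steps
  have hma : ∀ i, m i ∈ {m | MeetIrred m ∧ a ≤ m} := fun i =>
    ⟨(hm i).1, (haC _ (mem_range_self _)).trans (hm i).2.1⟩
  calc M + 1 = (range m).ncard + 1 := by rw [ncard_range_of_injective hm_inj, Nat.card_fin]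
    _ ≤ _ := Nat.add_le_add_right (ncard_le_ncard (range_subset_iff.mpr hma)) 1

theorem IsChain.ncard_le_card_meetIrred_add_one {C : Set α} (hC : IsChain (· ≤ ·) C) :
    C.ncard ≤ Nat.card {m : α // MeetIrred m} + 1 := by
  obtain rfl | ⟨x, -⟩ := C.eq_empty_or_nonempty
  · simp
  have : Nonempty α := ⟨x⟩
  obtain ⟨a, ha⟩ := (toFinite C).bddBelow
  calc C.ncard ≤ {m | MeetIrred m ∧ a ≤ m}.ncard + 1 := hC.ncard_le_ncard_meetIrred_add_one ha
    _ ≤ {m | MeetIrred m}.ncard + 1 := Nat.add_le_add_right (ncard_le_ncard fun _ h => h.1) 1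
    _ = Nat.card {m // MeetIrred m} + 1 := by rw [← Nat.card_coe_set_eq]; rfl

theorem IsChain.ncard_le_ncard_image_sup_add {D : Set α} (hD : IsChain (· ≤ ·) D) (a : α) :
    D.ncard ≤ ((a ⊔ ·) '' D).ncard + {m | MeetIrred m ∧ ¬ a ≤ m}.ncard := by
  rcases hDM : D.ncard with _ | M
  · omega
  obtain ⟨f, hf, rfl⟩ := hD.exists_strictMono_fin hDM
  obtain ⟨m, hm_inj, hm⟩ := hf.exists_meetIrred_steps
  set q : Fin (M + 1) → α := fun i => a ⊔ f i
  have hcollapsed : {i : Fin M | q i.castSucc = q i.succ}.ncard ≤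
      {m | MeetIrred m ∧ ¬ a ≤ m}.ncard := by
    refine ncard_le_ncard_of_injOn m (fun i hi => ⟨(hm i).1, fun ham => (hm i).2.2 ?_⟩)
      hm_inj.injOn
    calc f i.succ ≤ q i.succ := le_sup_right
      _ = q i.castSucc := hi.symm
      _ ≤ m i := sup_le ham (hm i).2.1
  have hq : Monotone q := fun i j hij => sup_le_sup_left (hf.monotone hij) a
  have himage : (a ⊔ ·) '' range f = range q := (range_comp _ _).symm
  have := hq.add_one_le_ncard_range_add
  rw [himage]
  omega

theorem spine_iff_exists_ncard {X : Set α} (hX : IsChain (· ≤ ·) X)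
    (hXcard : X.ncard = Nat.card {m : α // MeetIrred m} + 1) {a : α} :
    Spine a ↔ ∃ C : Set α, a ∈ C ∧ IsChain (· ≤ ·) C ∧
      Nat.card {m : α // MeetIrred m} + 1 ≤ C.ncard := by
  constructor
  · rintro ⟨C, haC, hC, hCmax⟩
    exact ⟨C, haC, hC, hXcard ▸ hCmax X hX⟩
  · rintro ⟨C, haC, hC, hCcard⟩
    exact ⟨C, haC, hC, fun D hD => hD.ncard_le_card_meetIrred_add_one.trans hCcard⟩

theorem Spine.sup {a b : α} (ha : Spine a) (hb : Spine b) {X : Set α}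
    (hX : IsChain (· ≤ ·) X) (hXcard : X.ncard = Nat.card {m : α // MeetIrred m} + 1) :
    Spine (a ⊔ b) := by
  rw [spine_iff_exists_ncard hX hXcard] at ha hb ⊢
  obtain ⟨C, haC, hC, hCcard⟩ := ha
  obtain ⟨D, hbD, hD, hDcard⟩ := hb
  set below := {x ∈ C | x ≤ a}
  set above := {x ∈ C | a ≤ x}
  set Q := (a ⊔ ·) '' D
  have hsplit : below.ncard + above.ncard = C.ncard + 1 := by
    have hunion : below ∪ above = C := ext fun x =>
      ⟨fun hx => hx.elim (·.1) (·.1), fun hx => (hC.total hx haC).imp (⟨hx, ·⟩) (⟨hx, ·⟩)⟩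
    have hinter : below ∩ above = {a} := ext fun x =>
      ⟨fun hx => le_antisymm hx.1.2 hx.2.2, by rintro rfl; exact ⟨⟨haC, le_rfl⟩, haC, le_rfl⟩⟩
    rw [← ncard_union_add_ncard_inter, hunion, hinter, ncard_singleton]
  have habove : above.ncard ≤ {m | MeetIrred m ∧ a ≤ m}.ncard + 1 :=
    (hC.mono (sep_subset _ _)).ncard_le_ncard_meetIrred_add_one fun _ hx => hx.2
  have hQ : D.ncard ≤ Q.ncard + {m | MeetIrred m ∧ ¬ a ≤ m}.ncard :=
    hD.ncard_le_ncard_image_sup_add a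
  have hmeetIrred : {m | MeetIrred m ∧ a ≤ m}.ncard + {m | MeetIrred m ∧ ¬ a ≤ m}.ncard =
      Nat.card {m : α // MeetIrred m} :=
    (ncard_inter_add_ncard_sdiff_eq_ncard {m | MeetIrred m} {m | a ≤ m}).trans
      (Nat.card_coe_set_eq _).symm
  have hbelow_Q : below ∩ Q ⊆ {a} := by
    rintro x ⟨hxa, ⟨y, -, rfl⟩⟩
    exact le_antisymm hxa.2 le_sup_left
  have hinter := (ncard_le_ncard hbelow_Q).trans (ncard_singleton a).le
  have hchain : IsChain (· ≤ ·) (below ∪ Q) := by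
    refine isChain_union.mpr ⟨hC.mono (sep_subset _ _), ?_, ?_⟩
    · exact Monotone.isChain_image (fun _ _ h => sup_le_sup_left h a) hD
    · rintro x hx _ ⟨y, -, rfl⟩ -
      exact Or.inl (hx.2.trans le_sup_left)
  refine ⟨below ∪ Q, Or.inr (mem_image_of_mem _ hbD), hchain, ?_⟩
  have := ncard_union_add_ncard_inter below Q
  omega

theorem spine_toDual_iff {a : α} : Spine (toDual a) ↔ Spine a := by
  constructor <;>
    exact fun ⟨C, haC, hC, hCmax⟩ => ⟨C, haC, hC.symm, fun D hD => hCmax D hD.symm⟩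

theorem Spine.inf {a b : α} (ha : Spine a) (hb : Spine b) {X : Set α}
    (hX : IsChain (· ≤ ·) X) (hXcard : X.ncard = Nat.card {j : α // JoinIrred j} + 1) :
    Spine (a ⊓ b) :=
  spine_toDual_iff.mp <|
    (spine_toDual_iff.mpr ha).sup (spine_toDual_iff.mpr hb) (α := αᵒᵈ) hX.symm hXcard

end Finite

/-- The spine of a trim lattice is closed under join and meet. -/
theorem spine_sublattice [Lattice α] [Finite α] (h : Trim α) (a b : α)
    (ha : Spine a) (hb : Spine b) :
    Spine (a ⊔ b) ∧ Spine (a ⊓ b) := by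
  obtain ⟨n, x, ⟨-, -, hcover, -⟩, hJ, hM⟩ := h
  have hx : StrictMono x := Fin.strictMono_iff_lt_succ.mpr fun i => (hcover i).lt
  have hX : (range x).ncard = n + 1 := by rw [ncard_range_of_injective hx.injective, Nat.card_fin]
  exact ⟨ha.sup hb hx.monotone.isChain_range (hM ▸ hX),
    ha.inf hb hx.monotone.isChain_range (hJ ▸ hX)⟩
end

section
/- Trim lattices satisfy the level condition: if a, b_1, ..., b_k are atoms with δ(a) < δ(b_1) < ... < δ(b_k), then a is not below the join b_1 ∨ ... ∨ b_k. -/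
variable {α : Type*}

/-!
Counting meet-irreducibles shows that every cover `x i ⋖ x (i + 1)` of the chain has a greatest
element above `x i` and not above `x (i + 1)`. The key claim is that if `x q ⊓ y = ⊥` and `b` is
an atom not below `x q`, then `x q ⊓ (y ⊔ b) = ⊥`; the theorem follows by adding the atoms `b i`
one at a time, since `δ a < δ (b i)` means that `b i` is not below `x (δ a)`.

For the claim, let `x (i + 1)` be the first nonzero element of the chain, an atom, and `m` the
greatest element not above it. Both `y` and `b` lie below `m`, and by left modularity the chain
`x j ⊓ m` has the same properties in the smaller lattice `Set.Iic m` (up to repeated elements),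
so the claim follows by induction on the size of the lattice.
-/

section LeftModular

variable [Lattice α] {x x' : α}

theorem LeftModular.inf_wcovBy_inf (hx : LeftModular x) (h : x ⩿ x') (m : α) :
    x ⊓ m ⩿ x' ⊓ m := by
  refine ⟨inf_le_inf_right m h.le, fun c hxc hcx' => ?_⟩
  have hcx : ¬ c ≤ x := fun hc => hxc.not_ge (le_inf hc (hcx'.le.trans inf_le_right))
  have hsup : x ⊔ c = x' :=
    (h.eq_or_eq le_sup_left (sup_le h.le (hcx'.le.trans inf_le_left))).resolve_left
      fun he => hcx (le_sup_right.trans he.le)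
  have : x' ⊓ m = c := by
    rw [← hsup, sup_comm, hx c m (hcx'.trans_le inf_le_right), sup_eq_left.mpr hxc.le]
  exact hcx'.ne this.symm

theorem LeftModular.restrict_Iic (hx : LeftModular x) (m : α) :
    LeftModular (⟨x ⊓ m, inf_le_right⟩ : Set.Iic m) := by
  intro y z hyz
  apply Subtype.ext
  simp only [Set.Iic.coe_inf, Set.Iic.coe_sup]
  have hxz : x ⊓ m ⊓ z = x ⊓ z := by rw [inf_assoc, inf_eq_right.mpr z.2]
  refine le_antisymm ?_ (sup_le (le_inf le_sup_left hyz.le) (inf_le_inf_right _ le_sup_right))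
  calc ((y : α) ⊔ x ⊓ m) ⊓ z ≤ ((y : α) ⊔ x) ⊓ z :=
        inf_le_inf_right _ (sup_le_sup_left inf_le_left _)
    _ = (y : α) ⊔ x ⊓ m ⊓ z := by rw [hxz]; exact hx y z hyz

theorem LeftModular.isGreatest_inf {M m : α} (hx : LeftModular x) (h : x ⋖ x')
    (hM : IsGreatest {z | x ≤ z ∧ ¬ x' ≤ z} M) (hm : ¬ x' ⊓ m ≤ x) :
    IsGreatest {z | z ≤ m ∧ x ⊓ m ≤ z ∧ ¬ x' ⊓ m ≤ z} (M ⊓ m) := by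
  refine ⟨⟨inf_le_right, inf_le_inf_right m hM.1.1, fun hle => hM.1.2 ?_⟩, ?_⟩
  · have hsup : x ⊔ x' ⊓ m = x' :=
      (h.wcovBy.eq_or_eq le_sup_left (sup_le h.le inf_le_left)).resolve_left
        fun he => hm (le_sup_right.trans he.le)
    exact hsup ▸ sup_le hM.1.1 (hle.trans inf_le_left)
  · rintro z ⟨hzm, hxz, hz⟩
    have hzm' : z < m := hzm.lt_of_ne fun he => hz (he ▸ inf_le_right)
    refine le_inf (hM.2 ⟨le_sup_left, fun hle => hz ?_⟩ |>.trans' le_sup_right) hzm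
    calc x' ⊓ m ≤ (z ⊔ x) ⊓ m := inf_le_inf_right m (sup_comm x z ▸ hle)
      _ = z ⊔ x ⊓ m := hx z m hzm'
      _ ≤ z := sup_le le_rfl hxz

end LeftModular

/-- Unlike `IsLMChain`, steps may be trivial, so that the notion passes to the intervals
`Set.Iic m`; the greatest elements avoiding each proper step stand in for the count of
meet-irreducibles. -/
structure IsWeakLMChain [Lattice α] [OrderBot α] {n : ℕ} (x : Fin (n + 1) → α) : Prop where
  zero_eq_bot : x 0 = ⊥
  wcovBy : ∀ i : Fin n, x i.castSucc ⩿ x i.succ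
  leftModular : ∀ i, LeftModular (x i)
  exists_isGreatest : ∀ i : Fin n, x i.castSucc ⋖ x i.succ →
    ∃ m, IsGreatest {z | x i.castSucc ≤ z ∧ ¬ x i.succ ≤ z} m

namespace IsWeakLMChain

variable [Lattice α] [OrderBot α] {n : ℕ} {x : Fin (n + 1) → α}

theorem monotone (hx : IsWeakLMChain x) : Monotone x :=
  Fin.monotone_iff_le_succ.2 fun i => (hx.wcovBy i).le

theorem restrict (hx : IsWeakLMChain x) (m : α) :
    IsWeakLMChain fun i => (⟨x i ⊓ m, inf_le_right⟩ : Set.Iic m) where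
  zero_eq_bot := Subtype.ext (by simp [hx.zero_eq_bot])
  wcovBy i := WCovBy.of_image (OrderEmbedding.subtype _)
    ((hx.leftModular _).inf_wcovBy_inf (hx.wcovBy i) m)
  leftModular i := (hx.leftModular i).restrict_Iic m
  exists_isGreatest i hi := by
    have hlt : x i.castSucc ⊓ m < x i.succ ⊓ m := hi.lt
    have hcov : x i.castSucc ⋖ x i.succ :=
      (hx.wcovBy i).covBy_of_ne fun he => hlt.ne (by rw [he])
    obtain ⟨M, hM⟩ := hx.exists_isGreatest i hcov
    have hM' := (hx.leftModular _).isGreatest_inf hcov hM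
      fun hle => hlt.not_ge (le_inf hle inf_le_right)
    exact ⟨⟨M ⊓ m, inf_le_right⟩, ⟨hM'.1.2.1, hM'.1.2.2⟩,
      fun z hz => hM'.2 ⟨z.2, hz.1, hz.2⟩⟩

theorem exists_bot_covBy (hx : IsWeakLMChain x) {q : Fin (n + 1)} (hq : x q ≠ ⊥) :
    ∃ i : Fin n, i.succ ≤ q ∧ x i.castSucc = ⊥ ∧ ⊥ ⋖ x i.succ := by
  induction q using Fin.induction with
  | zero => exact absurd hx.zero_eq_bot hq
  | succ i ih =>
    by_cases hi : x i.castSucc = ⊥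
    · exact ⟨i, le_rfl, hi, hi ▸ (hx.wcovBy i).covBy_of_ne (hi ▸ hq.symm)⟩
    · obtain ⟨j, hj, hj0, hjcov⟩ := ih hi
      exact ⟨j, hj.trans (Fin.castSucc_le_succ i), hj0, hjcov⟩

theorem inf_sup_eq_bot_of_isAtom [Finite α] (hx : IsWeakLMChain x) {q : Fin (n + 1)} {y b : α}
    (hy : x q ⊓ y = ⊥) (hb : IsAtom b) (hbq : ¬ b ≤ x q) : x q ⊓ (y ⊔ b) = ⊥ := by
  induction hN : Nat.card α using Nat.strong_induction_on generalizing α with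
  | _ N ih =>
  by_contra hne
  obtain ⟨i, hiq, hi0, hatom⟩ := hx.exists_bot_covBy (q := q) fun h => hne (by simp [h])
  obtain ⟨m, ⟨-, hmi⟩, hm⟩ := hx.exists_isGreatest i (hi0 ▸ hatom)
  have hle_m : ∀ z, ¬ x i.succ ≤ z → z ≤ m := fun z hz => hm ⟨hi0 ▸ bot_le, hz⟩
  have hiq' : x i.succ ≤ x q := hx.monotone hiq
  have hym : y ≤ m := hle_m y fun h => hatom.ne' (le_bot_iff.mp (hy ▸ le_inf hiq' h))
  have hbm : b ≤ m := hle_m b fun h =>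
    hbq (((hb.le_iff.mp h).resolve_left hatom.ne') ▸ hiq')
  have hcard : Nat.card (Set.Iic m) < N := hN ▸ Finite.card_subtype_lt hmi
  have hrestrict : x q ⊓ m ⊓ (y ⊔ b) = ⊥ := by
    have := ih _ hcard (hx.restrict m) (y := ⟨y, hym⟩)
      (Subtype.ext (by simp [inf_right_comm, hy])) (hb.Iic hbm)
      (fun h => hbq (le_inf_iff.mp h).1) rfl
    simpa using congrArg Subtype.val this
  rw [inf_assoc, inf_eq_right.mpr (sup_le hym hbm)] at hrestrict
  exact hne hrestrict

theorem inf_finset_sup_eq_bot [Finite α] (hx : IsWeakLMChain x) (q : Fin (n + 1)) {ι : Type*}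
    (s : Finset ι) {b : ι → α} (hb : ∀ i ∈ s, IsAtom (b i)) (hbq : ∀ i ∈ s, ¬ b i ≤ x q) :
    x q ⊓ s.sup b = ⊥ := by
  induction s using Finset.cons_induction with
  | empty => simp
  | cons i s _ ih =>
    rw [Finset.sup_cons, sup_comm]
    exact hx.inf_sup_eq_bot_of_isAtom (ih (fun j hj => hb j (Finset.mem_cons_of_mem hj))
      fun j hj => hbq j (Finset.mem_cons_of_mem hj))
      (hb i (Finset.mem_cons_self i s)) (hbq i (Finset.mem_cons_self i s))

end IsWeakLMChain

section Counting

variable [Lattice α] {n : ℕ} {x : Fin (n + 1) → α}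

theorem Maximal.meetIrred {a b z : α} (h : Maximal (fun z => a ≤ z ∧ ¬ b ≤ z) z) :
    MeetIrred z := by
  have hb_le : ∀ u, z < u → b ≤ u := fun u hu =>
    by_contra fun hbu => hu.not_ge (h.2 ⟨h.1.1.trans hu.le, hbu⟩ hu.le)
  exact ⟨fun htop => h.1.2 (htop b),
    fun u v hu hv huv => h.1.2 (huv ▸ le_inf (hb_le u hu) (hb_le v hv))⟩

theorem Monotone.eq_of_castSucc_le_of_not_succ_le (hx : Monotone x) {i j : Fin n} {z : α}
    (hi : x i.castSucc ≤ z ∧ ¬ x i.succ ≤ z) (hj : x j.castSucc ≤ z ∧ ¬ x j.succ ≤ z) : i = j := by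
  have key : ∀ {i j : Fin n}, x i.castSucc ≤ z → ¬ x j.succ ≤ z → i ≤ j := fun h1 h2 =>
    not_lt.mp fun hji => h2 ((hx (Fin.succ_le_castSucc_iff.mpr hji)).trans h1)
  exact le_antisymm (key hi.1 hj.2) (key hj.1 hi.2)

theorem IsLMChain.exists_isGreatest [Finite α] (hx : IsLMChain x)
    (hM : Nat.card {v : α // MeetIrred v} = n) (i : Fin n) :
    ∃ m, IsGreatest {z | x i.castSucc ≤ z ∧ ¬ x i.succ ≤ z} m := by
  have hmono : Monotone x := Fin.monotone_iff_le_succ.2 fun j => (hx.2.2.1 j).le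
  choose F _ hF using fun j : Fin n =>
    Finite.exists_le_maximal (p := fun z => x j.castSucc ≤ z ∧ ¬ x j.succ ≤ z)
      ⟨le_rfl, (hx.2.2.1 j).lt.not_ge⟩
  let G : Fin n → {v : α // MeetIrred v} := fun j => ⟨F j, (hF j).meetIrred⟩
  -- `n` avoidance classes, pairwise disjoint, and only `n` meet-irreducibles
  have hG : G.Bijective := by
    refine Function.Injective.bijective_of_nat_card_le (fun j k hjk => ?_) (by simp [hM])
    have hFjk : F j = F k := congrArg Subtype.val hjk
    exact hmono.eq_of_castSucc_le_of_not_succ_le (hF j).1 (hFjk ▸ (hF k).1)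
  refine ⟨F i, (hF i).1, fun z hz => ?_⟩
  obtain ⟨z', hzz', hz'⟩ := Finite.exists_le_maximal hz
  obtain ⟨j, hj⟩ := hG.2 ⟨z', hz'.meetIrred⟩
  have hFj : F j = z' := congrArg Subtype.val hj
  obtain rfl : j = i := hmono.eq_of_castSucc_le_of_not_succ_le (hF j).1 (hFj ▸ hz'.1)
  exact hzz'.trans hFj.ge

theorem IsLMChain.isWeakLMChain [OrderBot α] [Finite α] (hx : IsLMChain x)
    (hM : Nat.card {v : α // MeetIrred v} = n) : IsWeakLMChain x where
  zero_eq_bot := hx.1.eq_bot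
  wcovBy i := (hx.2.2.1 i).wcovBy
  leftModular := hx.2.2.2
  exists_isGreatest i _ := hx.exists_isGreatest hM i

end Counting

theorem level_condition_general [Lattice α] [BoundedOrder α] [Finite α] {n : ℕ}
    (x : Fin (n + 1) → α) (hx : IsLMChain x)
    (hM : Nat.card {v : α // MeetIrred v} = n)
    {k : ℕ} (a : α) (b : Fin k → α) (ha : IsAtom a) (hb : ∀ i, IsAtom (b i))
    (da : Fin (n + 1)) (db : Fin k → Fin (n + 1))
    (hda : IsLeast {i : Fin (n + 1) | a ≤ x i} da)
    (hdb : ∀ i, IsLeast {j : Fin (n + 1) | b i ≤ x j} (db i))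
    (hlt : ∀ i, da < db i) :
    ¬ a ≤ Finset.univ.sup b := by
  intro hsup
  have hbot : x da ⊓ Finset.univ.sup b = ⊥ :=
    (hx.isWeakLMChain hM).inf_finset_sup_eq_bot da _ (fun i _ => hb i)
      fun i _ hbi => (hlt i).not_ge ((hdb i).2 hbi)
  exact ha.1 (le_bot_iff.mp (hbot ▸ le_inf hda.1 hsup))

/-- The level condition: if `a, b 1, …, b k` are atoms whose labels satisfy
`δ a < δ (b 1) < ⋯ < δ (b k)`, then `a` is not below `b 1 ⊔ ⋯ ⊔ b k`. -/
theorem level_condition [Lattice α] [BoundedOrder α] [Finite α] {n : ℕ}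
    (x : Fin (n + 1) → α) (hx : IsLMChain x)
    (hJ : Nat.card {v : α // JoinIrred v} = n)
    (hM : Nat.card {v : α // MeetIrred v} = n)
    {k : ℕ} (a : α) (b : Fin k → α) (ha : IsAtom a) (hb : ∀ i, IsAtom (b i))
    (da : Fin (n + 1)) (db : Fin k → Fin (n + 1))
    (hda : IsLeast {i : Fin (n + 1) | a ≤ x i} da)
    (hdb : ∀ i, IsLeast {j : Fin (n + 1) | b i ≤ x j} (db i))
    (hmono : StrictMono db) (hlt : ∀ i, da < db i) :
    ¬ a ≤ Finset.univ.sup b :=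
  level_condition_general x hx hM a b ha hb da db hda hdb hlt
end
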